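/- Let B̂₈ be the smallest set of RCC8 relations that contains the eight singleton basic relations and is closed under converse, weak composition, and binary (nonempty) intersection. Then B̂₈ is a distributive subalgebra of RCC8: for all R, T₁, T₂ ∈ B̂₈ with T₁ ∩ T₂ ≠ ∅, R ⋄ (T₁ ∩ T₂) = (R ⋄ T₁) ∩ (R ⋄ T₂) and (T₁ ∩ T₂) ⋄ R = (T₁ ⋄ R) ∩ (T₂ ⋄ R). -/

import Mathlib

/-- A *region* is a nonempty regular closed subset of the Euclidean plane `ℝ × ℝ`. -/
def Region : Type :=
  {x : Set (ℝ × ℝ) // x.Nonempty ∧ x = closure (interior x)}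

namespace Region

/-- Part-of: `x P y` iff `x ⊆ y`. -/
def P (x y : Region) : Prop := x.1 ⊆ y.1

/-- Overlap: `x O y` iff some region is a common part of `x` and `y`. -/
def O (x y : Region) : Prop := ∃ z : Region, z.1 ⊆ x.1 ∧ z.1 ⊆ y.1

/-- Connection: `x C y` iff `x ∩ y ≠ ∅`. -/
def C (x y : Region) : Prop := (x.1 ∩ y.1).Nonempty

/-- External connection: connected but not overlapping. -/
def EC (x y : Region) : Prop := Region.C x y ∧ ¬ Region.O x y

/-- Tangential proper part. -/
def TPP (x y : Region) : Prop :=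
  x.1 ⊆ y.1 ∧ x ≠ y ∧ ∃ z : Region, Region.EC z x ∧ Region.EC z y

end Region

/-- The eight basic RCC8 relations. -/
inductive RCC8Basic : Type
  | DC | EC | PO | TPP | NTPP | TPPi | NTPPi | EQ
deriving DecidableEq

namespace RCC8Basic

/-- Interpretation of the basic RCC8 relations on regions. -/
def interp : RCC8Basic → Region → Region → Prop
  | DC, x, y => ¬ Region.C x y
  | EC, x, y => Region.EC x y
  | PO, x, y => Region.O x y ∧ ¬ x.1 ⊆ y.1 ∧ ¬ y.1 ⊆ x.1
  | TPP, x, y => Region.TPP x y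
  | NTPP, x, y => x.1 ⊆ y.1 ∧ x ≠ y ∧ ¬ Region.TPP x y
  | TPPi, x, y => Region.TPP y x
  | NTPPi, x, y => y.1 ⊆ x.1 ∧ y ≠ x ∧ ¬ Region.TPP y x
  | EQ, x, y => x = y

/-- Converse of a basic RCC8 relation. -/
def conv : RCC8Basic → RCC8Basic
  | DC => DC | EC => EC | PO => PO | TPP => TPPi | NTPP => NTPPi
  | TPPi => TPP | NTPPi => NTPP | EQ => EQ

end RCC8Basic

/-- An RCC8 relation is a union of basic relations, identified with a subset of `B₈`. -/
abbrev RCC8Rel : Type := Set RCC8Basic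

namespace RCC8Rel

/-- A pair of regions is an instance of an RCC8 relation iff it is an instance of one of
its basic relations. -/
def interp (R : RCC8Rel) (x y : Region) : Prop := ∃ b ∈ R, RCC8Basic.interp b x y

/-- Converse of an RCC8 relation. -/
def conv (R : RCC8Rel) : RCC8Rel := {b | RCC8Basic.conv b ∈ R}

/-- Weak composition: `γ ∈ R ⋄ S` iff `γ` intersects the relational composition `R ∘ S`. -/
def comp (R S : RCC8Rel) : RCC8Rel :=
  {γ | ∃ x z : Region, RCC8Basic.interp γ x z ∧
        ∃ y : Region, RCC8Rel.interp R x y ∧ RCC8Rel.interp S y z}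

end RCC8Rel

/-- `B̂₈`: the smallest set of RCC8 relations containing the eight singleton basic
relations and closed under converse, weak composition, and nonempty intersection. -/
inductive BHat8 : RCC8Rel → Prop
  | basic (b : RCC8Basic) : BHat8 {b}
  | conv {R : RCC8Rel} : BHat8 R → BHat8 (RCC8Rel.conv R)
  | comp {R S : RCC8Rel} : BHat8 R → BHat8 S → BHat8 (RCC8Rel.comp R S)
  | inter {R S : RCC8Rel} : BHat8 R → BHat8 S → (R ∩ S).Nonempty → BHat8 (R ∩ S)


set_option linter.unusedVariables false

namespace RCC8Aux

open Set

abbrev Pt := ℝ × ℝ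

lemma Region.regular (x : Region) : x.1 = closure (interior x.1) := x.2.2
lemma Region.nonempty (x : Region) : x.1.Nonempty := x.2.1

lemma Region.int_nonempty (x : Region) : (interior x.1).Nonempty := by
  rcases x.2.1 with ⟨p, hp⟩
  by_contra h
  rw [Set.not_nonempty_iff_eq_empty] at h
  have h2 := x.2.2
  rw [h, closure_empty] at h2
  exact (Set.notMem_empty p) (h2 ▸ hp)

lemma touch (x : Region) {p : Pt} (hp : p ∈ x.1) {U : Set Pt} (hU : IsOpen U)
    (hpU : p ∈ U) : (interior x.1 ∩ U).Nonempty := by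
  have hp' : p ∈ closure (interior x.1) := x.2.2 ▸ hp
  rcases mem_closure_iff.1 hp' U hU hpU with ⟨q, hq1, hq2⟩
  exact ⟨q, hq2, hq1⟩

/-- the closed box `[a,b] × [c,d]` as a region. -/
noncomputable def mkBox (a b c d : ℝ) (h1 : a < b) (h2 : c < d) : Region :=
  ⟨Icc a b ×ˢ Icc c d, ⟨⟨(a, c), by simp [h1.le, h2.le]⟩, by
    rw [interior_prod_eq, interior_Icc, interior_Icc, closure_prod_eq,
      closure_Ioo h1.ne, closure_Ioo h2.ne]⟩⟩

lemma mkBox_coe (a b c d : ℝ) (h1 : a < b) (h2 : c < d) :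
    (mkBox a b c d h1 h2).1 = Icc a b ×ˢ Icc c d := rfl

lemma exists_region_subset {U : Set Pt} (hU : IsOpen U) {q : Pt} (hq : q ∈ U) :
    ∃ r : Region, r.1 ⊆ U := by
  rcases Metric.isOpen_iff.1 hU q hq with ⟨ε, hε, hball⟩
  refine ⟨mkBox (q.1 - ε/4) (q.1 + ε/4) (q.2 - ε/4) (q.2 + ε/4)
    (by linarith) (by linarith), ?_⟩
  rw [mkBox_coe]
  intro p hp
  apply hball
  rw [Metric.mem_ball, Prod.dist_eq]
  rcases hp with ⟨hp1, hp2⟩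
  simp only [mem_Icc] at hp1 hp2
  have d1 : dist p.1 q.1 ≤ ε/4 := by
    rw [Real.dist_eq, abs_le]; constructor <;> linarith
  have d2 : dist p.2 q.2 ≤ ε/4 := by
    rw [Real.dist_eq, abs_le]; constructor <;> linarith
  have : max (dist p.1 q.1) (dist p.2 q.2) ≤ ε/4 := max_le d1 d2
  calc max (dist p.1 q.1) (dist p.2 q.2) ≤ ε/4 := this
    _ < ε := by linarith

lemma O_iff (x y : Region) :
    Region.O x y ↔ (interior x.1 ∩ interior y.1).Nonempty := by
  constructor
  · rintro ⟨z, hzx, hzy⟩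
    rcases Region.int_nonempty z with ⟨q, hq⟩
    exact ⟨q, interior_mono hzx hq, interior_mono hzy hq⟩
  · rintro ⟨q, hq⟩
    rcases exists_region_subset (isOpen_interior.inter isOpen_interior) hq with ⟨r, hr⟩
    exact ⟨r, fun p hp => interior_subset (hr hp).1, fun p hp => interior_subset (hr hp).2⟩

/-- the closure of the complement of a region is a region (if the region is proper),
    and it is externally connected to everything containing a boundary point. -/
lemma TPP_iff (x y : Region) :
    Region.TPP x y ↔ x.1 ⊆ y.1 ∧ x ≠ y ∧ ¬ (x.1 ⊆ interior y.1) := by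
  constructor
  · rintro ⟨hsub, hne, z, ⟨⟨p, hpz, hpx⟩, hOzx⟩, ⟨hCzy, hOzy⟩⟩
    refine ⟨hsub, hne, fun hint => ?_⟩
    have : (interior z.1 ∩ interior y.1).Nonempty :=
      touch z hpz isOpen_interior (hint hpx)
    exact hOzy ((O_iff z y).2 this)
  · rintro ⟨hsub, hne, hnint⟩
    rcases not_subset.1 hnint with ⟨p, hpx, hpint⟩
    have hpy : p ∈ y.1 := hsub hpx
    -- the witness region: closure of the complement of y
    have hyo : IsOpen y.1ᶜ := (y.2.2 ▸ isClosed_closure : IsClosed y.1).isOpen_compl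
    have hw_eq : closure y.1ᶜ = (interior y.1)ᶜ := by
      rw [closure_compl]
    have hpw : p ∈ closure y.1ᶜ := by rw [hw_eq]; exact hpint
    have hreg : closure y.1ᶜ = closure (interior (closure y.1ᶜ)) := by
      apply le_antisymm
      · exact closure_mono (hyo.subset_interior_closure)
      · exact closure_minimal interior_subset isClosed_closure
    set w : Region := ⟨closure y.1ᶜ, ⟨p, hpw⟩, hreg⟩ with hwdef
    have hintw : interior w.1 ⊆ y.1ᶜ := by
      show interior (closure y.1ᶜ) ⊆ y.1ᶜ
      rw [closure_compl, interior_compl]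
      intro q hq
      simp only [mem_compl_iff] at hq ⊢
      intro hqy
      exact hq (y.2.2 ▸ hqy)
    refine ⟨hsub, hne, w, ⟨⟨p, hpw, hpx⟩, ?_⟩, ⟨⟨p, hpw, hpy⟩, ?_⟩⟩
    · intro hO
      rcases (O_iff w x).1 hO with ⟨q, hq1, hq2⟩
      exact hintw hq1 (hsub (interior_subset hq2))
    · intro hO
      rcases (O_iff w y).1 hO with ⟨q, hq1, hq2⟩
      exact hintw hq1 (interior_subset hq2)

end RCC8Aux

namespace RCC8Aux
open Set RCC8Basic

lemma interp_DC_iff (x y : Region) :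
    RCC8Basic.interp .DC x y ↔ ¬ (x.1 ∩ y.1).Nonempty := Iff.rfl

lemma interp_EC_iff (x y : Region) :
    RCC8Basic.interp .EC x y ↔
      (x.1 ∩ y.1).Nonempty ∧ ¬ (interior x.1 ∩ interior y.1).Nonempty := by
  show Region.C x y ∧ ¬ Region.O x y ↔ _
  rw [Region.C, O_iff]

lemma interp_PO_iff (x y : Region) :
    RCC8Basic.interp .PO x y ↔
      (interior x.1 ∩ interior y.1).Nonempty ∧ ¬ x.1 ⊆ y.1 ∧ ¬ y.1 ⊆ x.1 := by
  show Region.O x y ∧ _ ↔ _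
  rw [O_iff]

lemma interp_TPP_iff (x y : Region) :
    RCC8Basic.interp .TPP x y ↔ x.1 ⊆ y.1 ∧ ¬ x = y ∧ ¬ (x.1 ⊆ interior y.1) :=
  TPP_iff x y

lemma interp_NTPP_iff (x y : Region) :
    RCC8Basic.interp .NTPP x y ↔ x.1 ⊆ interior y.1 ∧ ¬ x = y := by
  show x.1 ⊆ y.1 ∧ x ≠ y ∧ ¬ Region.TPP x y ↔ _
  rw [TPP_iff]
  constructor
  · rintro ⟨h1, h2, h3⟩
    refine ⟨?_, h2⟩
    by_contra h4
    exact h3 ⟨h1, h2, h4⟩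
  · rintro ⟨h1, h2⟩
    exact ⟨h1.trans interior_subset, h2, fun h => h.2.2 h1⟩

lemma interp_TPPi_iff (x y : Region) :
    RCC8Basic.interp .TPPi x y ↔ y.1 ⊆ x.1 ∧ ¬ x = y ∧ ¬ (y.1 ⊆ interior x.1) := by
  show Region.TPP y x ↔ _
  rw [TPP_iff]
  constructor
  · rintro ⟨h1, h2, h3⟩; exact ⟨h1, fun h => h2 h.symm, h3⟩
  · rintro ⟨h1, h2, h3⟩; exact ⟨h1, fun h => h2 h.symm, h3⟩

lemma interp_NTPPi_iff (x y : Region) :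
    RCC8Basic.interp .NTPPi x y ↔ y.1 ⊆ interior x.1 ∧ ¬ x = y := by
  show RCC8Basic.interp .NTPP y x
    ↔ _
  rw [interp_NTPP_iff]
  constructor
  · rintro ⟨h1, h2⟩; exact ⟨h1, fun h => h2 h.symm⟩
  · rintro ⟨h1, h2⟩; exact ⟨h1, fun h => h2 h.symm⟩

lemma interp_EQ_iff (x y : Region) : RCC8Basic.interp .EQ x y ↔ x = y := Iff.rfl

/-- the abstract "profile" of a basic relation, over seven atomic propositions:
`A1` = carriers meet, `A2` = interiors meet, `A3` = `x ⊆ y`, `A4` = `y ⊆ x`,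
`A5` = `x ⊆ int y`, `A6` = `y ⊆ int x`, `A7` = `x = y`. -/
def charP (A1 A2 A3 A4 A5 A6 A7 : Prop) : RCC8Basic → Prop
  | .DC => ¬A1
  | .EC => A1 ∧ ¬A2
  | .PO => A2 ∧ ¬A3 ∧ ¬A4
  | .TPP => A3 ∧ ¬A7 ∧ ¬A5
  | .NTPP => A5 ∧ ¬A7
  | .TPPi => A4 ∧ ¬A7 ∧ ¬A6
  | .NTPPi => A6 ∧ ¬A7
  | .EQ => A7

/-- the profile axioms that hold for any two regions. -/
structure ProfAx (A1 A2 A3 A4 A5 A6 A7 : Prop) : Prop where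
  f1 : A2 → A1
  f2 : A3 → A1
  f3 : A4 → A1
  f4 : A3 → A2
  f5 : A4 → A2
  f6 : A5 → A3
  f7 : A6 → A4
  f8 : A3 → A4 → A7
  f9 : A7 → A3
  f9' : A7 → A4

lemma charP_unique {A1 A2 A3 A4 A5 A6 A7 : Prop} (ax : ProfAx A1 A2 A3 A4 A5 A6 A7)
    {γ b : RCC8Basic} (hγ : charP A1 A2 A3 A4 A5 A6 A7 γ)
    (hb : charP A1 A2 A3 A4 A5 A6 A7 b) : γ = b :=
  have f1 := ax.f1; have f2 := ax.f2; have f3 := ax.f3; have f4 := ax.f4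
  have f5 := ax.f5; have f6 := ax.f6; have f7 := ax.f7; have f8 := ax.f8
  have f9 := ax.f9; have f9' := ax.f9'
  match γ, b, hγ, hb with
  | .DC, .DC, _, _ => rfl
  | .DC, .EC, n1, ⟨a1, n2⟩ => (n1 a1).elim
  | .DC, .PO, n1, ⟨a2, n3, n4⟩ => (n1 (f1 a2)).elim
  | .DC, .TPP, n1, ⟨a3, n7t, n5⟩ => (n1 (f2 a3)).elim
  | .DC, .NTPP, n1, ⟨a5, n7n⟩ => (n1 (f2 (f6 a5))).elim
  | .DC, .TPPi, n1, ⟨a4, n7ti, n6⟩ => (n1 (f3 a4)).elim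
  | .DC, .NTPPi, n1, ⟨a6, n7ni⟩ => (n1 (f3 (f7 a6))).elim
  | .DC, .EQ, n1, a7 => (n1 (f2 (f9 a7))).elim
  | .EC, .DC, ⟨a1, n2⟩, n1 => (n1 a1).elim
  | .EC, .EC, _, _ => rfl
  | .EC, .PO, ⟨a1, n2⟩, ⟨a2, n3, n4⟩ => (n2 a2).elim
  | .EC, .TPP, ⟨a1, n2⟩, ⟨a3, n7t, n5⟩ => (n2 (f4 a3)).elim
  | .EC, .NTPP, ⟨a1, n2⟩, ⟨a5, n7n⟩ => (n2 (f4 (f6 a5))).elim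
  | .EC, .TPPi, ⟨a1, n2⟩, ⟨a4, n7ti, n6⟩ => (n2 (f5 a4)).elim
  | .EC, .NTPPi, ⟨a1, n2⟩, ⟨a6, n7ni⟩ => (n2 (f5 (f7 a6))).elim
  | .EC, .EQ, ⟨a1, n2⟩, a7 => (n2 (f4 (f9 a7))).elim
  | .PO, .DC, ⟨a2, n3, n4⟩, n1 => (n1 (f1 a2)).elim
  | .PO, .EC, ⟨a2, n3, n4⟩, ⟨a1, n2⟩ => (n2 a2).elim
  | .PO, .PO, _, _ => rfl
  | .PO, .TPP, ⟨a2, n3, n4⟩, ⟨a3, n7t, n5⟩ => (n3 a3).elim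
  | .PO, .NTPP, ⟨a2, n3, n4⟩, ⟨a5, n7n⟩ => (n3 (f6 a5)).elim
  | .PO, .TPPi, ⟨a2, n3, n4⟩, ⟨a4, n7ti, n6⟩ => (n4 a4).elim
  | .PO, .NTPPi, ⟨a2, n3, n4⟩, ⟨a6, n7ni⟩ => (n4 (f7 a6)).elim
  | .PO, .EQ, ⟨a2, n3, n4⟩, a7 => (n3 (f9 a7)).elim
  | .TPP, .DC, ⟨a3, n7t, n5⟩, n1 => (n1 (f2 a3)).elim
  | .TPP, .EC, ⟨a3, n7t, n5⟩, ⟨a1, n2⟩ => (n2 (f4 a3)).elim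
  | .TPP, .PO, ⟨a3, n7t, n5⟩, ⟨a2, n3, n4⟩ => (n3 a3).elim
  | .TPP, .TPP, _, _ => rfl
  | .TPP, .NTPP, ⟨a3, n7t, n5⟩, ⟨a5, n7n⟩ => (n5 a5).elim
  | .TPP, .TPPi, ⟨a3, n7t, n5⟩, ⟨a4, n7ti, n6⟩ => (n7t (f8 a3 a4)).elim
  | .TPP, .NTPPi, ⟨a3, n7t, n5⟩, ⟨a6, n7ni⟩ => (n7t (f8 a3 (f7 a6))).elim
  | .TPP, .EQ, ⟨a3, n7t, n5⟩, a7 => (n7t a7).elim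
  | .NTPP, .DC, ⟨a5, n7n⟩, n1 => (n1 (f2 (f6 a5))).elim
  | .NTPP, .EC, ⟨a5, n7n⟩, ⟨a1, n2⟩ => (n2 (f4 (f6 a5))).elim
  | .NTPP, .PO, ⟨a5, n7n⟩, ⟨a2, n3, n4⟩ => (n3 (f6 a5)).elim
  | .NTPP, .TPP, ⟨a5, n7n⟩, ⟨a3, n7t, n5⟩ => (n5 a5).elim
  | .NTPP, .NTPP, _, _ => rfl
  | .NTPP, .TPPi, ⟨a5, n7n⟩, ⟨a4, n7ti, n6⟩ => (n7n (f8 (f6 a5) a4)).elim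
  | .NTPP, .NTPPi, ⟨a5, n7n⟩, ⟨a6, n7ni⟩ => (n7n (f8 (f6 a5) (f7 a6))).elim
  | .NTPP, .EQ, ⟨a5, n7n⟩, a7 => (n7n a7).elim
  | .TPPi, .DC, ⟨a4, n7ti, n6⟩, n1 => (n1 (f3 a4)).elim
  | .TPPi, .EC, ⟨a4, n7ti, n6⟩, ⟨a1, n2⟩ => (n2 (f5 a4)).elim
  | .TPPi, .PO, ⟨a4, n7ti, n6⟩, ⟨a2, n3, n4⟩ => (n4 a4).elim
  | .TPPi, .TPP, ⟨a4, n7ti, n6⟩, ⟨a3, n7t, n5⟩ => (n7t (f8 a3 a4)).elim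
  | .TPPi, .NTPP, ⟨a4, n7ti, n6⟩, ⟨a5, n7n⟩ => (n7n (f8 (f6 a5) a4)).elim
  | .TPPi, .TPPi, _, _ => rfl
  | .TPPi, .NTPPi, ⟨a4, n7ti, n6⟩, ⟨a6, n7ni⟩ => (n6 a6).elim
  | .TPPi, .EQ, ⟨a4, n7ti, n6⟩, a7 => (n7ti a7).elim
  | .NTPPi, .DC, ⟨a6, n7ni⟩, n1 => (n1 (f3 (f7 a6))).elim
  | .NTPPi, .EC, ⟨a6, n7ni⟩, ⟨a1, n2⟩ => (n2 (f5 (f7 a6))).elim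
  | .NTPPi, .PO, ⟨a6, n7ni⟩, ⟨a2, n3, n4⟩ => (n4 (f7 a6)).elim
  | .NTPPi, .TPP, ⟨a6, n7ni⟩, ⟨a3, n7t, n5⟩ => (n7t (f8 a3 (f7 a6))).elim
  | .NTPPi, .NTPP, ⟨a6, n7ni⟩, ⟨a5, n7n⟩ => (n7n (f8 (f6 a5) (f7 a6))).elim
  | .NTPPi, .TPPi, ⟨a6, n7ni⟩, ⟨a4, n7ti, n6⟩ => (n6 a6).elim
  | .NTPPi, .NTPPi, _, _ => rfl
  | .NTPPi, .EQ, ⟨a6, n7ni⟩, a7 => (n7ni a7).elim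
  | .EQ, .DC, a7, n1 => (n1 (f2 (f9 a7))).elim
  | .EQ, .EC, a7, ⟨a1, n2⟩ => (n2 (f4 (f9 a7))).elim
  | .EQ, .PO, a7, ⟨a2, n3, n4⟩ => (n3 (f9 a7)).elim
  | .EQ, .TPP, a7, ⟨a3, n7t, n5⟩ => (n7t a7).elim
  | .EQ, .NTPP, a7, ⟨a5, n7n⟩ => (n7n a7).elim
  | .EQ, .TPPi, a7, ⟨a4, n7ti, n6⟩ => (n7ti a7).elim
  | .EQ, .NTPPi, a7, ⟨a6, n7ni⟩ => (n7ni a7).elim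
  | .EQ, .EQ, _, _ => rfl

lemma interp_charP {x y : Region} {b : RCC8Basic} (h : b.interp x y) :
    charP (x.1 ∩ y.1).Nonempty (interior x.1 ∩ interior y.1).Nonempty
      (x.1 ⊆ y.1) (y.1 ⊆ x.1) (x.1 ⊆ interior y.1) (y.1 ⊆ interior x.1) (x = y) b := by
  cases b
  · exact (interp_DC_iff x y).1 h
  · exact (interp_EC_iff x y).1 h
  · exact (interp_PO_iff x y).1 h
  · exact (interp_TPP_iff x y).1 h
  · exact (interp_NTPP_iff x y).1 h
  · exact (interp_TPPi_iff x y).1 h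
  · exact (interp_NTPPi_iff x y).1 h
  · exact (interp_EQ_iff x y).1 h

lemma profAx (x y : Region) :
    ProfAx (x.1 ∩ y.1).Nonempty (interior x.1 ∩ interior y.1).Nonempty
      (x.1 ⊆ y.1) (y.1 ⊆ x.1) (x.1 ⊆ interior y.1) (y.1 ⊆ interior x.1) (x = y) where
  f1 := fun ⟨q, h1, h2⟩ => ⟨q, interior_subset h1, interior_subset h2⟩
  f2 := fun h => (Region.nonempty x).imp fun p hp => ⟨hp, h hp⟩
  f3 := fun h => (Region.nonempty y).imp fun p hp => ⟨h hp, hp⟩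
  f4 := fun h => (Region.int_nonempty x).imp fun p hp => ⟨hp, interior_mono h hp⟩
  f5 := fun h => (Region.int_nonempty y).imp fun p hp => ⟨interior_mono h hp, hp⟩
  f6 := fun h => h.trans interior_subset
  f7 := fun h => h.trans interior_subset
  f8 := fun h1 h2 => Subtype.ext (h1.antisymm h2)
  f9 := fun h => h ▸ subset_rfl
  f9' := fun h => h ▸ subset_rfl

theorem interp_unique {x y : Region} {γ b : RCC8Basic}
    (hγ : γ.interp x y) (hb : b.interp x y) : γ = b :=
  charP_unique (profAx x y) (interp_charP hγ) (interp_charP hb)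


section XHelpers
open Set
variable {u v w : Region}

lemma mts_swap (h : (u.1 ∩ v.1).Nonempty) : (v.1 ∩ u.1).Nonempty :=
  h.imp fun _ hp => ⟨hp.2, hp.1⟩
lemma ov_swap (h : (interior u.1 ∩ interior v.1).Nonempty) :
    (interior v.1 ∩ interior u.1).Nonempty := h.imp fun _ hp => ⟨hp.2, hp.1⟩
lemma mts_of_ov (h : (interior u.1 ∩ interior v.1).Nonempty) : (u.1 ∩ v.1).Nonempty :=
  h.imp fun _ hp => ⟨interior_subset hp.1, interior_subset hp.2⟩
lemma ov_common (h1 : w.1 ⊆ u.1) (h2 : w.1 ⊆ v.1) :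
    (interior u.1 ∩ interior v.1).Nonempty :=
  (Region.int_nonempty w).imp fun _ hq => ⟨interior_mono h1 hq, interior_mono h2 hq⟩
lemma mts_sub (h : u.1 ⊆ v.1) : (u.1 ∩ v.1).Nonempty :=
  (Region.nonempty u).imp fun _ hp => ⟨hp, h hp⟩
lemma mts_mono_r (h : (u.1 ∩ v.1).Nonempty) (h2 : v.1 ⊆ w.1) : (u.1 ∩ w.1).Nonempty :=
  h.imp fun _ hp => ⟨hp.1, h2 hp.2⟩
lemma mts_mono_l (h : (u.1 ∩ v.1).Nonempty) (h2 : u.1 ⊆ w.1) : (w.1 ∩ v.1).Nonempty :=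
  h.imp fun _ hp => ⟨h2 hp.1, hp.2⟩
lemma ov_mono_r (h : (interior u.1 ∩ interior v.1).Nonempty) (h2 : v.1 ⊆ w.1) :
    (interior u.1 ∩ interior w.1).Nonempty :=
  h.imp fun _ hp => ⟨hp.1, interior_mono h2 hp.2⟩
lemma ov_mono_l (h : (interior u.1 ∩ interior v.1).Nonempty) (h2 : u.1 ⊆ w.1) :
    (interior w.1 ∩ interior v.1).Nonempty :=
  h.imp fun _ hp => ⟨interior_mono h2 hp.1, hp.2⟩
lemma gTouch (h1 : (u.1 ∩ v.1).Nonempty) (h2 : v.1 ⊆ interior w.1) :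
    (interior u.1 ∩ interior w.1).Nonempty := by
  obtain ⟨p, hp⟩ := h1
  exact touch u hp.1 isOpen_interior (h2 hp.2)
lemma sub_eq (h1 : u.1 ⊆ v.1) (h2 : v.1 ⊆ u.1) : u = v := Subtype.ext (h1.antisymm h2)

end XHelpers


/-- the RCC8 weak composition table. -/
def tableL : RCC8Basic → RCC8Basic → List RCC8Basic
  | .DC, .DC => [.DC, .EC, .PO, .TPP, .NTPP, .TPPi, .NTPPi, .EQ]
  | .DC, .EC => [.DC, .EC, .PO, .TPP, .NTPP]
  | .DC, .PO => [.DC, .EC, .PO, .TPP, .NTPP]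
  | .DC, .TPP => [.DC, .EC, .PO, .TPP, .NTPP]
  | .DC, .NTPP => [.DC, .EC, .PO, .TPP, .NTPP]
  | .DC, .TPPi => [.DC]
  | .DC, .NTPPi => [.DC]
  | .DC, .EQ => [.DC]
  | .EC, .DC => [.DC, .EC, .PO, .TPPi, .NTPPi]
  | .EC, .EC => [.DC, .EC, .PO, .TPP, .TPPi, .EQ]
  | .EC, .PO => [.DC, .EC, .PO, .TPP, .NTPP]
  | .EC, .TPP => [.EC, .PO, .TPP, .NTPP]
  | .EC, .NTPP => [.PO, .TPP, .NTPP]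
  | .EC, .TPPi => [.DC, .EC]
  | .EC, .NTPPi => [.DC]
  | .EC, .EQ => [.EC]
  | .PO, .DC => [.DC, .EC, .PO, .TPPi, .NTPPi]
  | .PO, .EC => [.DC, .EC, .PO, .TPPi, .NTPPi]
  | .PO, .PO => [.DC, .EC, .PO, .TPP, .NTPP, .TPPi, .NTPPi, .EQ]
  | .PO, .TPP => [.PO, .TPP, .NTPP]
  | .PO, .NTPP => [.PO, .TPP, .NTPP]
  | .PO, .TPPi => [.DC, .EC, .PO, .TPPi, .NTPPi]
  | .PO, .NTPPi => [.DC, .EC, .PO, .TPPi, .NTPPi]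
  | .PO, .EQ => [.PO]
  | .TPP, .DC => [.DC]
  | .TPP, .EC => [.DC, .EC]
  | .TPP, .PO => [.DC, .EC, .PO, .TPP, .NTPP]
  | .TPP, .TPP => [.TPP, .NTPP]
  | .TPP, .NTPP => [.NTPP]
  | .TPP, .TPPi => [.DC, .EC, .PO, .TPP, .TPPi, .EQ]
  | .TPP, .NTPPi => [.DC, .EC, .PO, .TPPi, .NTPPi]
  | .TPP, .EQ => [.TPP]
  | .NTPP, .DC => [.DC]
  | .NTPP, .EC => [.DC]
  | .NTPP, .PO => [.DC, .EC, .PO, .TPP, .NTPP]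
  | .NTPP, .TPP => [.NTPP]
  | .NTPP, .NTPP => [.NTPP]
  | .NTPP, .TPPi => [.DC, .EC, .PO, .TPP, .NTPP]
  | .NTPP, .NTPPi => [.DC, .EC, .PO, .TPP, .NTPP, .TPPi, .NTPPi, .EQ]
  | .NTPP, .EQ => [.NTPP]
  | .TPPi, .DC => [.DC, .EC, .PO, .TPPi, .NTPPi]
  | .TPPi, .EC => [.EC, .PO, .TPPi, .NTPPi]
  | .TPPi, .PO => [.PO, .TPPi, .NTPPi]
  | .TPPi, .TPP => [.PO, .TPP, .TPPi, .EQ]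
  | .TPPi, .NTPP => [.PO, .TPP, .NTPP]
  | .TPPi, .TPPi => [.TPPi, .NTPPi]
  | .TPPi, .NTPPi => [.NTPPi]
  | .TPPi, .EQ => [.TPPi]
  | .NTPPi, .DC => [.DC, .EC, .PO, .TPPi, .NTPPi]
  | .NTPPi, .EC => [.PO, .TPPi, .NTPPi]
  | .NTPPi, .PO => [.PO, .TPPi, .NTPPi]
  | .NTPPi, .TPP => [.PO, .TPPi, .NTPPi]
  | .NTPPi, .NTPP => [.PO, .TPP, .NTPP, .TPPi, .NTPPi, .EQ]
  | .NTPPi, .TPPi => [.NTPPi]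
  | .NTPPi, .NTPPi => [.NTPPi]
  | .NTPPi, .EQ => [.NTPPi]
  | .EQ, .DC => [.DC]
  | .EQ, .EC => [.EC]
  | .EQ, .PO => [.PO]
  | .EQ, .TPP => [.TPP]
  | .EQ, .NTPP => [.NTPP]
  | .EQ, .TPPi => [.TPPi]
  | .EQ, .NTPPi => [.NTPPi]
  | .EQ, .EQ => [.EQ]


lemma sound_DC_EC {x y z : Region} (h1 : RCC8Basic.interp .DC x y)
    (h2 : RCC8Basic.interp .EC y z) {γ : RCC8Basic} (hγ : γ.interp x z) :
    γ ∈ tableL .DC .EC := by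
  have d1 := (interp_DC_iff x y).1 h1
  obtain ⟨m2, o2⟩ := (interp_EC_iff y z).1 h2
  cases γ with
  | DC => decide
  | EC => decide
  | PO => decide
  | TPP => decide
  | NTPP => decide
  | TPPi =>
    exact absurd (mts_swap (mts_mono_r m2 ((interp_TPPi_iff x z).1 hγ).1)) d1
  | NTPPi =>
    exact absurd (mts_swap (mts_mono_r m2 (((interp_NTPPi_iff x z).1 hγ).1.trans interior_subset))) d1
  | EQ =>
    obtain rfl := (interp_EQ_iff x z).1 hγ
    exact absurd (mts_swap m2) d1

lemma sound_DC_PO {x y z : Region} (h1 : RCC8Basic.interp .DC x y)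
    (h2 : RCC8Basic.interp .PO y z) {γ : RCC8Basic} (hγ : γ.interp x z) :
    γ ∈ tableL .DC .PO := by
  have d1 := (interp_DC_iff x y).1 h1
  obtain ⟨v2, s2, t2⟩ := (interp_PO_iff y z).1 h2
  cases γ with
  | DC => decide
  | EC => decide
  | PO => decide
  | TPP => decide
  | NTPP => decide
  | TPPi =>
    exact absurd (mts_swap (mts_mono_r (mts_of_ov v2) ((interp_TPPi_iff x z).1 hγ).1)) d1
  | NTPPi =>
    exact absurd (mts_swap (mts_mono_r (mts_of_ov v2) (((interp_NTPPi_iff x z).1 hγ).1.trans interior_subset))) d1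
  | EQ =>
    obtain rfl := (interp_EQ_iff x z).1 hγ
    exact absurd (mts_swap (mts_of_ov v2)) d1

lemma sound_DC_TPP {x y z : Region} (h1 : RCC8Basic.interp .DC x y)
    (h2 : RCC8Basic.interp .TPP y z) {γ : RCC8Basic} (hγ : γ.interp x z) :
    γ ∈ tableL .DC .TPP := by
  have d1 := (interp_DC_iff x y).1 h1
  obtain ⟨s2, e2, i2⟩ := (interp_TPP_iff y z).1 h2
  cases γ with
  | DC => decide
  | EC => decide
  | PO => decide
  | TPP => decide
  | NTPP => decide
  | TPPi =>
    exact absurd (mts_swap (mts_sub (s2.trans ((interp_TPPi_iff x z).1 hγ).1))) d1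
  | NTPPi =>
    exact absurd (mts_swap (mts_sub (s2.trans (((interp_NTPPi_iff x z).1 hγ).1.trans interior_subset)))) d1
  | EQ =>
    obtain rfl := (interp_EQ_iff x z).1 hγ
    exact absurd (mts_swap (mts_sub s2)) d1

lemma sound_DC_NTPP {x y z : Region} (h1 : RCC8Basic.interp .DC x y)
    (h2 : RCC8Basic.interp .NTPP y z) {γ : RCC8Basic} (hγ : γ.interp x z) :
    γ ∈ tableL .DC .NTPP := by
  have d1 := (interp_DC_iff x y).1 h1
  obtain ⟨i2, e2⟩ := (interp_NTPP_iff y z).1 h2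
  have s2' : y.1 ⊆ z.1 := i2.trans interior_subset
  cases γ with
  | DC => decide
  | EC => decide
  | PO => decide
  | TPP => decide
  | NTPP => decide
  | TPPi =>
    exact absurd (mts_swap (mts_sub (s2'.trans ((interp_TPPi_iff x z).1 hγ).1))) d1
  | NTPPi =>
    exact absurd (mts_swap (mts_sub (s2'.trans (((interp_NTPPi_iff x z).1 hγ).1.trans interior_subset)))) d1
  | EQ =>
    obtain rfl := (interp_EQ_iff x z).1 hγ
    exact absurd (mts_swap (mts_sub s2')) d1

lemma sound_DC_TPPi {x y z : Region} (h1 : RCC8Basic.interp .DC x y)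
    (h2 : RCC8Basic.interp .TPPi y z) {γ : RCC8Basic} (hγ : γ.interp x z) :
    γ ∈ tableL .DC .TPPi := by
  have d1 := (interp_DC_iff x y).1 h1
  obtain ⟨s2, e2, i2⟩ := (interp_TPPi_iff y z).1 h2
  have NM : ¬ (x.1 ∩ z.1).Nonempty := fun h => d1 (mts_mono_r h s2)
  cases γ with
  | DC => decide
  | EC =>
    exact absurd ((interp_EC_iff x z).1 hγ).1 NM
  | PO =>
    exact absurd (mts_of_ov ((interp_PO_iff x z).1 hγ).1) NM
  | TPP =>
    exact absurd (mts_sub ((interp_TPP_iff x z).1 hγ).1) NM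
  | NTPP =>
    exact absurd (mts_sub (((interp_NTPP_iff x z).1 hγ).1.trans interior_subset)) NM
  | TPPi =>
    exact absurd (mts_swap (mts_sub ((interp_TPPi_iff x z).1 hγ).1)) NM
  | NTPPi =>
    exact absurd (mts_swap (mts_sub (((interp_NTPPi_iff x z).1 hγ).1.trans interior_subset))) NM
  | EQ =>
    obtain rfl := (interp_EQ_iff x z).1 hγ
    exact absurd (mts_sub subset_rfl) NM

lemma sound_DC_NTPPi {x y z : Region} (h1 : RCC8Basic.interp .DC x y)
    (h2 : RCC8Basic.interp .NTPPi y z) {γ : RCC8Basic} (hγ : γ.interp x z) :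
    γ ∈ tableL .DC .NTPPi := by
  have d1 := (interp_DC_iff x y).1 h1
  obtain ⟨i2, e2⟩ := (interp_NTPPi_iff y z).1 h2
  have NM : ¬ (x.1 ∩ z.1).Nonempty := fun h => d1 (mts_mono_r h (i2.trans interior_subset))
  cases γ with
  | DC => decide
  | EC =>
    exact absurd ((interp_EC_iff x z).1 hγ).1 NM
  | PO =>
    exact absurd (mts_of_ov ((interp_PO_iff x z).1 hγ).1) NM
  | TPP =>
    exact absurd (mts_sub ((interp_TPP_iff x z).1 hγ).1) NM
  | NTPP =>
    exact absurd (mts_sub (((interp_NTPP_iff x z).1 hγ).1.trans interior_subset)) NM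
  | TPPi =>
    exact absurd (mts_swap (mts_sub ((interp_TPPi_iff x z).1 hγ).1)) NM
  | NTPPi =>
    exact absurd (mts_swap (mts_sub (((interp_NTPPi_iff x z).1 hγ).1.trans interior_subset))) NM
  | EQ =>
    obtain rfl := (interp_EQ_iff x z).1 hγ
    exact absurd (mts_sub subset_rfl) NM

lemma sound_EC_DC {x y z : Region} (h1 : RCC8Basic.interp .EC x y)
    (h2 : RCC8Basic.interp .DC y z) {γ : RCC8Basic} (hγ : γ.interp x z) :
    γ ∈ tableL .EC .DC := by
  obtain ⟨m1, o1⟩ := (interp_EC_iff x y).1 h1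
  have d2 := (interp_DC_iff y z).1 h2
  cases γ with
  | DC => decide
  | EC => decide
  | PO => decide
  | TPP =>
    exact absurd (mts_mono_r (mts_swap m1) ((interp_TPP_iff x z).1 hγ).1) d2
  | NTPP =>
    exact absurd (mts_mono_r (mts_swap m1) (((interp_NTPP_iff x z).1 hγ).1.trans interior_subset)) d2
  | TPPi => decide
  | NTPPi => decide
  | EQ =>
    obtain rfl := (interp_EQ_iff x z).1 hγ
    exact absurd (mts_swap m1) d2

lemma sound_EC_EC {x y z : Region} (h1 : RCC8Basic.interp .EC x y)
    (h2 : RCC8Basic.interp .EC y z) {γ : RCC8Basic} (hγ : γ.interp x z) :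
    γ ∈ tableL .EC .EC := by
  obtain ⟨m1, o1⟩ := (interp_EC_iff x y).1 h1
  obtain ⟨m2, o2⟩ := (interp_EC_iff y z).1 h2
  cases γ with
  | DC => decide
  | EC => decide
  | PO => decide
  | TPP => decide
  | NTPP =>
    exact absurd (gTouch (mts_swap m1) ((interp_NTPP_iff x z).1 hγ).1) o2
  | TPPi => decide
  | NTPPi =>
    exact absurd (ov_swap (gTouch m2 ((interp_NTPPi_iff x z).1 hγ).1)) o1
  | EQ => decide

lemma sound_EC_PO {x y z : Region} (h1 : RCC8Basic.interp .EC x y)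
    (h2 : RCC8Basic.interp .PO y z) {γ : RCC8Basic} (hγ : γ.interp x z) :
    γ ∈ tableL .EC .PO := by
  obtain ⟨m1, o1⟩ := (interp_EC_iff x y).1 h1
  obtain ⟨v2, s2, t2⟩ := (interp_PO_iff y z).1 h2
  cases γ with
  | DC => decide
  | EC => decide
  | PO => decide
  | TPP => decide
  | NTPP => decide
  | TPPi =>
    exact absurd (ov_swap (ov_mono_r v2 ((interp_TPPi_iff x z).1 hγ).1)) o1
  | NTPPi =>
    exact absurd (ov_swap (ov_mono_r v2 (((interp_NTPPi_iff x z).1 hγ).1.trans interior_subset))) o1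
  | EQ =>
    obtain rfl := (interp_EQ_iff x z).1 hγ
    exact absurd (ov_swap v2) o1

lemma sound_EC_TPP {x y z : Region} (h1 : RCC8Basic.interp .EC x y)
    (h2 : RCC8Basic.interp .TPP y z) {γ : RCC8Basic} (hγ : γ.interp x z) :
    γ ∈ tableL .EC .TPP := by
  obtain ⟨m1, o1⟩ := (interp_EC_iff x y).1 h1
  obtain ⟨s2, e2, i2⟩ := (interp_TPP_iff y z).1 h2
  cases γ with
  | DC =>
    exact absurd (mts_mono_r m1 s2) ((interp_DC_iff x z).1 hγ)
  | EC => decide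
  | PO => decide
  | TPP => decide
  | NTPP => decide
  | TPPi =>
    exact absurd (ov_common (s2.trans ((interp_TPPi_iff x z).1 hγ).1) subset_rfl) o1
  | NTPPi =>
    exact absurd (ov_common (s2.trans (((interp_NTPPi_iff x z).1 hγ).1.trans interior_subset)) subset_rfl) o1
  | EQ =>
    obtain rfl := (interp_EQ_iff x z).1 hγ
    exact absurd (ov_common s2 subset_rfl) o1

lemma sound_EC_NTPP {x y z : Region} (h1 : RCC8Basic.interp .EC x y)
    (h2 : RCC8Basic.interp .NTPP y z) {γ : RCC8Basic} (hγ : γ.interp x z) :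
    γ ∈ tableL .EC .NTPP := by
  obtain ⟨m1, o1⟩ := (interp_EC_iff x y).1 h1
  obtain ⟨i2, e2⟩ := (interp_NTPP_iff y z).1 h2
  have s2' : y.1 ⊆ z.1 := i2.trans interior_subset
  have OV : (interior x.1 ∩ interior z.1).Nonempty := gTouch m1 i2
  cases γ with
  | DC =>
    exact absurd (mts_of_ov OV) ((interp_DC_iff x z).1 hγ)
  | EC =>
    exact absurd OV ((interp_EC_iff x z).1 hγ).2
  | PO => decide
  | TPP => decide
  | NTPP => decide
  | TPPi =>
    exact absurd (ov_common (s2'.trans ((interp_TPPi_iff x z).1 hγ).1) subset_rfl) o1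
  | NTPPi =>
    exact absurd (ov_common (s2'.trans (((interp_NTPPi_iff x z).1 hγ).1.trans interior_subset)) subset_rfl) o1
  | EQ =>
    obtain rfl := (interp_EQ_iff x z).1 hγ
    exact absurd (ov_common s2' subset_rfl) o1

lemma sound_EC_TPPi {x y z : Region} (h1 : RCC8Basic.interp .EC x y)
    (h2 : RCC8Basic.interp .TPPi y z) {γ : RCC8Basic} (hγ : γ.interp x z) :
    γ ∈ tableL .EC .TPPi := by
  obtain ⟨m1, o1⟩ := (interp_EC_iff x y).1 h1
  obtain ⟨s2, e2, i2⟩ := (interp_TPPi_iff y z).1 h2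
  have NOV : ¬ (interior x.1 ∩ interior z.1).Nonempty := fun hv => o1 (ov_mono_r hv s2)
  cases γ with
  | DC => decide
  | EC => decide
  | PO =>
    exact absurd ((interp_PO_iff x z).1 hγ).1 NOV
  | TPP =>
    exact absurd (ov_common subset_rfl ((interp_TPP_iff x z).1 hγ).1) NOV
  | NTPP =>
    exact absurd (ov_common subset_rfl (((interp_NTPP_iff x z).1 hγ).1.trans interior_subset)) NOV
  | TPPi =>
    exact absurd (ov_common ((interp_TPPi_iff x z).1 hγ).1 subset_rfl) NOV
  | NTPPi =>
    exact absurd (ov_common (((interp_NTPPi_iff x z).1 hγ).1.trans interior_subset) subset_rfl) NOV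
  | EQ =>
    obtain rfl := (interp_EQ_iff x z).1 hγ
    exact absurd (ov_common subset_rfl subset_rfl) NOV

lemma sound_EC_NTPPi {x y z : Region} (h1 : RCC8Basic.interp .EC x y)
    (h2 : RCC8Basic.interp .NTPPi y z) {γ : RCC8Basic} (hγ : γ.interp x z) :
    γ ∈ tableL .EC .NTPPi := by
  obtain ⟨m1, o1⟩ := (interp_EC_iff x y).1 h1
  obtain ⟨i2, e2⟩ := (interp_NTPPi_iff y z).1 h2
  have NM : ¬ (x.1 ∩ z.1).Nonempty := fun h => o1 (gTouch h i2)
  cases γ with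
  | DC => decide
  | EC =>
    exact absurd ((interp_EC_iff x z).1 hγ).1 NM
  | PO =>
    exact absurd (mts_of_ov ((interp_PO_iff x z).1 hγ).1) NM
  | TPP =>
    exact absurd (mts_sub ((interp_TPP_iff x z).1 hγ).1) NM
  | NTPP =>
    exact absurd (mts_sub (((interp_NTPP_iff x z).1 hγ).1.trans interior_subset)) NM
  | TPPi =>
    exact absurd (mts_swap (mts_sub ((interp_TPPi_iff x z).1 hγ).1)) NM
  | NTPPi =>
    exact absurd (mts_swap (mts_sub (((interp_NTPPi_iff x z).1 hγ).1.trans interior_subset))) NM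
  | EQ =>
    obtain rfl := (interp_EQ_iff x z).1 hγ
    exact absurd (mts_sub subset_rfl) NM

lemma sound_PO_DC {x y z : Region} (h1 : RCC8Basic.interp .PO x y)
    (h2 : RCC8Basic.interp .DC y z) {γ : RCC8Basic} (hγ : γ.interp x z) :
    γ ∈ tableL .PO .DC := by
  obtain ⟨v1, s1, t1⟩ := (interp_PO_iff x y).1 h1
  have d2 := (interp_DC_iff y z).1 h2
  cases γ with
  | DC => decide
  | EC => decide
  | PO => decide
  | TPP =>
    exact absurd (mts_mono_r (mts_swap (mts_of_ov v1)) ((interp_TPP_iff x z).1 hγ).1) d2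
  | NTPP =>
    exact absurd (mts_mono_r (mts_swap (mts_of_ov v1)) (((interp_NTPP_iff x z).1 hγ).1.trans interior_subset)) d2
  | TPPi => decide
  | NTPPi => decide
  | EQ =>
    obtain rfl := (interp_EQ_iff x z).1 hγ
    exact absurd (mts_swap (mts_of_ov v1)) d2

lemma sound_PO_EC {x y z : Region} (h1 : RCC8Basic.interp .PO x y)
    (h2 : RCC8Basic.interp .EC y z) {γ : RCC8Basic} (hγ : γ.interp x z) :
    γ ∈ tableL .PO .EC := by
  obtain ⟨v1, s1, t1⟩ := (interp_PO_iff x y).1 h1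
  obtain ⟨m2, o2⟩ := (interp_EC_iff y z).1 h2
  cases γ with
  | DC => decide
  | EC => decide
  | PO => decide
  | TPP =>
    exact absurd (ov_mono_r (ov_swap v1) ((interp_TPP_iff x z).1 hγ).1) o2
  | NTPP =>
    exact absurd (ov_mono_r (ov_swap v1) (((interp_NTPP_iff x z).1 hγ).1.trans interior_subset)) o2
  | TPPi => decide
  | NTPPi => decide
  | EQ =>
    obtain rfl := (interp_EQ_iff x z).1 hγ
    exact absurd (ov_swap v1) o2

lemma sound_PO_TPP {x y z : Region} (h1 : RCC8Basic.interp .PO x y)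
    (h2 : RCC8Basic.interp .TPP y z) {γ : RCC8Basic} (hγ : γ.interp x z) :
    γ ∈ tableL .PO .TPP := by
  obtain ⟨v1, s1, t1⟩ := (interp_PO_iff x y).1 h1
  obtain ⟨s2, e2, i2⟩ := (interp_TPP_iff y z).1 h2
  have OV : (interior x.1 ∩ interior z.1).Nonempty := ov_mono_r v1 s2
  cases γ with
  | DC =>
    exact absurd (mts_of_ov OV) ((interp_DC_iff x z).1 hγ)
  | EC =>
    exact absurd OV ((interp_EC_iff x z).1 hγ).2
  | PO => decide
  | TPP => decide
  | NTPP => decide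
  | TPPi =>
    exact absurd (s2.trans ((interp_TPPi_iff x z).1 hγ).1) t1
  | NTPPi =>
    exact absurd (s2.trans (((interp_NTPPi_iff x z).1 hγ).1.trans interior_subset)) t1
  | EQ =>
    obtain rfl := (interp_EQ_iff x z).1 hγ
    exact absurd s2 t1

lemma sound_PO_NTPP {x y z : Region} (h1 : RCC8Basic.interp .PO x y)
    (h2 : RCC8Basic.interp .NTPP y z) {γ : RCC8Basic} (hγ : γ.interp x z) :
    γ ∈ tableL .PO .NTPP := by
  obtain ⟨v1, s1, t1⟩ := (interp_PO_iff x y).1 h1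
  obtain ⟨i2, e2⟩ := (interp_NTPP_iff y z).1 h2
  have s2' : y.1 ⊆ z.1 := i2.trans interior_subset
  have OV : (interior x.1 ∩ interior z.1).Nonempty := ov_mono_r v1 s2'
  cases γ with
  | DC =>
    exact absurd (mts_of_ov OV) ((interp_DC_iff x z).1 hγ)
  | EC =>
    exact absurd OV ((interp_EC_iff x z).1 hγ).2
  | PO => decide
  | TPP => decide
  | NTPP => decide
  | TPPi =>
    exact absurd (s2'.trans ((interp_TPPi_iff x z).1 hγ).1) t1
  | NTPPi =>
    exact absurd (s2'.trans (((interp_NTPPi_iff x z).1 hγ).1.trans interior_subset)) t1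
  | EQ =>
    obtain rfl := (interp_EQ_iff x z).1 hγ
    exact absurd s2' t1

lemma sound_PO_TPPi {x y z : Region} (h1 : RCC8Basic.interp .PO x y)
    (h2 : RCC8Basic.interp .TPPi y z) {γ : RCC8Basic} (hγ : γ.interp x z) :
    γ ∈ tableL .PO .TPPi := by
  obtain ⟨v1, s1, t1⟩ := (interp_PO_iff x y).1 h1
  obtain ⟨s2, e2, i2⟩ := (interp_TPPi_iff y z).1 h2
  cases γ with
  | DC => decide
  | EC => decide
  | PO => decide
  | TPP =>
    exact absurd (((interp_TPP_iff x z).1 hγ).1.trans s2) s1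
  | NTPP =>
    exact absurd ((((interp_NTPP_iff x z).1 hγ).1.trans interior_subset).trans s2) s1
  | TPPi => decide
  | NTPPi => decide
  | EQ =>
    obtain rfl := (interp_EQ_iff x z).1 hγ
    exact absurd s2 s1

lemma sound_PO_NTPPi {x y z : Region} (h1 : RCC8Basic.interp .PO x y)
    (h2 : RCC8Basic.interp .NTPPi y z) {γ : RCC8Basic} (hγ : γ.interp x z) :
    γ ∈ tableL .PO .NTPPi := by
  obtain ⟨v1, s1, t1⟩ := (interp_PO_iff x y).1 h1
  obtain ⟨i2, e2⟩ := (interp_NTPPi_iff y z).1 h2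
  have s2' : z.1 ⊆ y.1 := i2.trans interior_subset
  cases γ with
  | DC => decide
  | EC => decide
  | PO => decide
  | TPP =>
    exact absurd (((interp_TPP_iff x z).1 hγ).1.trans s2') s1
  | NTPP =>
    exact absurd ((((interp_NTPP_iff x z).1 hγ).1.trans interior_subset).trans s2') s1
  | TPPi => decide
  | NTPPi => decide
  | EQ =>
    obtain rfl := (interp_EQ_iff x z).1 hγ
    exact absurd s2' s1

lemma sound_TPP_DC {x y z : Region} (h1 : RCC8Basic.interp .TPP x y)
    (h2 : RCC8Basic.interp .DC y z) {γ : RCC8Basic} (hγ : γ.interp x z) :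
    γ ∈ tableL .TPP .DC := by
  obtain ⟨s1, e1, i1⟩ := (interp_TPP_iff x y).1 h1
  have d2 := (interp_DC_iff y z).1 h2
  have NM : ¬ (x.1 ∩ z.1).Nonempty := fun h => d2 (mts_mono_l h s1)
  cases γ with
  | DC => decide
  | EC =>
    exact absurd ((interp_EC_iff x z).1 hγ).1 NM
  | PO =>
    exact absurd (mts_of_ov ((interp_PO_iff x z).1 hγ).1) NM
  | TPP =>
    exact absurd (mts_sub ((interp_TPP_iff x z).1 hγ).1) NM
  | NTPP =>
    exact absurd (mts_sub (((interp_NTPP_iff x z).1 hγ).1.trans interior_subset)) NM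
  | TPPi =>
    exact absurd (mts_swap (mts_sub ((interp_TPPi_iff x z).1 hγ).1)) NM
  | NTPPi =>
    exact absurd (mts_swap (mts_sub (((interp_NTPPi_iff x z).1 hγ).1.trans interior_subset))) NM
  | EQ =>
    obtain rfl := (interp_EQ_iff x z).1 hγ
    exact absurd (mts_sub subset_rfl) NM

lemma sound_TPP_EC {x y z : Region} (h1 : RCC8Basic.interp .TPP x y)
    (h2 : RCC8Basic.interp .EC y z) {γ : RCC8Basic} (hγ : γ.interp x z) :
    γ ∈ tableL .TPP .EC := by
  obtain ⟨s1, e1, i1⟩ := (interp_TPP_iff x y).1 h1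
  obtain ⟨m2, o2⟩ := (interp_EC_iff y z).1 h2
  have NOV : ¬ (interior x.1 ∩ interior z.1).Nonempty := fun hv => o2 (ov_mono_l hv s1)
  cases γ with
  | DC => decide
  | EC => decide
  | PO =>
    exact absurd ((interp_PO_iff x z).1 hγ).1 NOV
  | TPP =>
    exact absurd (ov_common subset_rfl ((interp_TPP_iff x z).1 hγ).1) NOV
  | NTPP =>
    exact absurd (ov_common subset_rfl (((interp_NTPP_iff x z).1 hγ).1.trans interior_subset)) NOV
  | TPPi =>
    exact absurd (ov_common ((interp_TPPi_iff x z).1 hγ).1 subset_rfl) NOV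
  | NTPPi =>
    exact absurd (ov_common (((interp_NTPPi_iff x z).1 hγ).1.trans interior_subset) subset_rfl) NOV
  | EQ =>
    obtain rfl := (interp_EQ_iff x z).1 hγ
    exact absurd (ov_common subset_rfl subset_rfl) NOV

lemma sound_TPP_PO {x y z : Region} (h1 : RCC8Basic.interp .TPP x y)
    (h2 : RCC8Basic.interp .PO y z) {γ : RCC8Basic} (hγ : γ.interp x z) :
    γ ∈ tableL .TPP .PO := by
  obtain ⟨s1, e1, i1⟩ := (interp_TPP_iff x y).1 h1
  obtain ⟨v2, s2, t2⟩ := (interp_PO_iff y z).1 h2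
  cases γ with
  | DC => decide
  | EC => decide
  | PO => decide
  | TPP => decide
  | NTPP => decide
  | TPPi =>
    exact absurd (((interp_TPPi_iff x z).1 hγ).1.trans s1) t2
  | NTPPi =>
    exact absurd ((((interp_NTPPi_iff x z).1 hγ).1.trans interior_subset).trans s1) t2
  | EQ =>
    obtain rfl := (interp_EQ_iff x z).1 hγ
    exact absurd s1 t2

lemma sound_TPP_TPP {x y z : Region} (h1 : RCC8Basic.interp .TPP x y)
    (h2 : RCC8Basic.interp .TPP y z) {γ : RCC8Basic} (hγ : γ.interp x z) :
    γ ∈ tableL .TPP .TPP := by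
  obtain ⟨s1, e1, i1⟩ := (interp_TPP_iff x y).1 h1
  obtain ⟨s2, e2, i2⟩ := (interp_TPP_iff y z).1 h2
  have SUB : x.1 ⊆ z.1 := s1.trans s2
  cases γ with
  | DC =>
    exact absurd (mts_sub SUB) ((interp_DC_iff x z).1 hγ)
  | EC =>
    exact absurd (ov_common subset_rfl SUB) ((interp_EC_iff x z).1 hγ).2
  | PO =>
    exact absurd SUB ((interp_PO_iff x z).1 hγ).2.1
  | TPP => decide
  | NTPP => decide
  | TPPi =>
    exact absurd (sub_eq s1 (s2.trans ((interp_TPPi_iff x z).1 hγ).1)) e1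
  | NTPPi =>
    exact absurd (sub_eq s1 (s2.trans (((interp_NTPPi_iff x z).1 hγ).1.trans interior_subset))) e1
  | EQ =>
    obtain rfl := (interp_EQ_iff x z).1 hγ
    exact absurd (sub_eq s1 s2) e1

lemma sound_TPP_NTPP {x y z : Region} (h1 : RCC8Basic.interp .TPP x y)
    (h2 : RCC8Basic.interp .NTPP y z) {γ : RCC8Basic} (hγ : γ.interp x z) :
    γ ∈ tableL .TPP .NTPP := by
  obtain ⟨s1, e1, i1⟩ := (interp_TPP_iff x y).1 h1
  obtain ⟨i2, e2⟩ := (interp_NTPP_iff y z).1 h2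
  have ISUB : x.1 ⊆ interior z.1 := s1.trans i2
  have SUB : x.1 ⊆ z.1 := ISUB.trans interior_subset
  cases γ with
  | DC =>
    exact absurd (mts_sub SUB) ((interp_DC_iff x z).1 hγ)
  | EC =>
    exact absurd (ov_common subset_rfl SUB) ((interp_EC_iff x z).1 hγ).2
  | PO =>
    exact absurd SUB ((interp_PO_iff x z).1 hγ).2.1
  | TPP =>
    exact absurd ISUB ((interp_TPP_iff x z).1 hγ).2.2
  | NTPP => decide
  | TPPi =>
    exact absurd (sub_eq s1 ((i2.trans interior_subset).trans ((interp_TPPi_iff x z).1 hγ).1)) e1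
  | NTPPi =>
    exact absurd (sub_eq s1 ((i2.trans interior_subset).trans (((interp_NTPPi_iff x z).1 hγ).1.trans interior_subset))) e1
  | EQ =>
    obtain rfl := (interp_EQ_iff x z).1 hγ
    exact absurd (sub_eq s1 (i2.trans interior_subset)) e1

lemma sound_TPP_TPPi {x y z : Region} (h1 : RCC8Basic.interp .TPP x y)
    (h2 : RCC8Basic.interp .TPPi y z) {γ : RCC8Basic} (hγ : γ.interp x z) :
    γ ∈ tableL .TPP .TPPi := by
  obtain ⟨s1, e1, i1⟩ := (interp_TPP_iff x y).1 h1
  obtain ⟨s2, e2, i2⟩ := (interp_TPPi_iff y z).1 h2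
  cases γ with
  | DC => decide
  | EC => decide
  | PO => decide
  | TPP => decide
  | NTPP =>
    exact absurd (((interp_NTPP_iff x z).1 hγ).1.trans (interior_mono s2)) i1
  | TPPi => decide
  | NTPPi =>
    exact absurd (((interp_NTPPi_iff x z).1 hγ).1.trans (interior_mono s1)) i2
  | EQ => decide

lemma sound_TPP_NTPPi {x y z : Region} (h1 : RCC8Basic.interp .TPP x y)
    (h2 : RCC8Basic.interp .NTPPi y z) {γ : RCC8Basic} (hγ : γ.interp x z) :
    γ ∈ tableL .TPP .NTPPi := by
  obtain ⟨s1, e1, i1⟩ := (interp_TPP_iff x y).1 h1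
  obtain ⟨i2, e2⟩ := (interp_NTPPi_iff y z).1 h2
  cases γ with
  | DC => decide
  | EC => decide
  | PO => decide
  | TPP =>
    exact absurd (((interp_TPP_iff x z).1 hγ).1.trans i2) i1
  | NTPP =>
    exact absurd ((((interp_NTPP_iff x z).1 hγ).1.trans interior_subset).trans i2) i1
  | TPPi => decide
  | NTPPi => decide
  | EQ =>
    obtain rfl := (interp_EQ_iff x z).1 hγ
    exact absurd i2 i1

lemma sound_NTPP_DC {x y z : Region} (h1 : RCC8Basic.interp .NTPP x y)
    (h2 : RCC8Basic.interp .DC y z) {γ : RCC8Basic} (hγ : γ.interp x z) :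
    γ ∈ tableL .NTPP .DC := by
  obtain ⟨i1, e1⟩ := (interp_NTPP_iff x y).1 h1
  have d2 := (interp_DC_iff y z).1 h2
  have NM : ¬ (x.1 ∩ z.1).Nonempty := fun h => d2 (mts_mono_l h (i1.trans interior_subset))
  cases γ with
  | DC => decide
  | EC =>
    exact absurd ((interp_EC_iff x z).1 hγ).1 NM
  | PO =>
    exact absurd (mts_of_ov ((interp_PO_iff x z).1 hγ).1) NM
  | TPP =>
    exact absurd (mts_sub ((interp_TPP_iff x z).1 hγ).1) NM
  | NTPP =>
    exact absurd (mts_sub (((interp_NTPP_iff x z).1 hγ).1.trans interior_subset)) NM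
  | TPPi =>
    exact absurd (mts_swap (mts_sub ((interp_TPPi_iff x z).1 hγ).1)) NM
  | NTPPi =>
    exact absurd (mts_swap (mts_sub (((interp_NTPPi_iff x z).1 hγ).1.trans interior_subset))) NM
  | EQ =>
    obtain rfl := (interp_EQ_iff x z).1 hγ
    exact absurd (mts_sub subset_rfl) NM

lemma sound_NTPP_EC {x y z : Region} (h1 : RCC8Basic.interp .NTPP x y)
    (h2 : RCC8Basic.interp .EC y z) {γ : RCC8Basic} (hγ : γ.interp x z) :
    γ ∈ tableL .NTPP .EC := by
  obtain ⟨i1, e1⟩ := (interp_NTPP_iff x y).1 h1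
  obtain ⟨m2, o2⟩ := (interp_EC_iff y z).1 h2
  have NM : ¬ (x.1 ∩ z.1).Nonempty := fun h => o2 (ov_swap (gTouch (mts_swap h) i1))
  cases γ with
  | DC => decide
  | EC =>
    exact absurd ((interp_EC_iff x z).1 hγ).1 NM
  | PO =>
    exact absurd (mts_of_ov ((interp_PO_iff x z).1 hγ).1) NM
  | TPP =>
    exact absurd (mts_sub ((interp_TPP_iff x z).1 hγ).1) NM
  | NTPP =>
    exact absurd (mts_sub (((interp_NTPP_iff x z).1 hγ).1.trans interior_subset)) NM
  | TPPi =>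
    exact absurd (mts_swap (mts_sub ((interp_TPPi_iff x z).1 hγ).1)) NM
  | NTPPi =>
    exact absurd (mts_swap (mts_sub (((interp_NTPPi_iff x z).1 hγ).1.trans interior_subset))) NM
  | EQ =>
    obtain rfl := (interp_EQ_iff x z).1 hγ
    exact absurd (mts_sub subset_rfl) NM

lemma sound_NTPP_PO {x y z : Region} (h1 : RCC8Basic.interp .NTPP x y)
    (h2 : RCC8Basic.interp .PO y z) {γ : RCC8Basic} (hγ : γ.interp x z) :
    γ ∈ tableL .NTPP .PO := by
  obtain ⟨i1, e1⟩ := (interp_NTPP_iff x y).1 h1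
  obtain ⟨v2, s2, t2⟩ := (interp_PO_iff y z).1 h2
  have s1' : x.1 ⊆ y.1 := i1.trans interior_subset
  cases γ with
  | DC => decide
  | EC => decide
  | PO => decide
  | TPP => decide
  | NTPP => decide
  | TPPi =>
    exact absurd (((interp_TPPi_iff x z).1 hγ).1.trans s1') t2
  | NTPPi =>
    exact absurd ((((interp_NTPPi_iff x z).1 hγ).1.trans interior_subset).trans s1') t2
  | EQ =>
    obtain rfl := (interp_EQ_iff x z).1 hγ
    exact absurd s1' t2

lemma sound_NTPP_TPP {x y z : Region} (h1 : RCC8Basic.interp .NTPP x y)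
    (h2 : RCC8Basic.interp .TPP y z) {γ : RCC8Basic} (hγ : γ.interp x z) :
    γ ∈ tableL .NTPP .TPP := by
  obtain ⟨i1, e1⟩ := (interp_NTPP_iff x y).1 h1
  obtain ⟨s2, e2, i2⟩ := (interp_TPP_iff y z).1 h2
  have ISUB : x.1 ⊆ interior z.1 := i1.trans (interior_mono s2)
  have SUB : x.1 ⊆ z.1 := ISUB.trans interior_subset
  cases γ with
  | DC =>
    exact absurd (mts_sub SUB) ((interp_DC_iff x z).1 hγ)
  | EC =>
    exact absurd (ov_common subset_rfl SUB) ((interp_EC_iff x z).1 hγ).2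
  | PO =>
    exact absurd SUB ((interp_PO_iff x z).1 hγ).2.1
  | TPP =>
    exact absurd ISUB ((interp_TPP_iff x z).1 hγ).2.2
  | NTPP => decide
  | TPPi =>
    exact absurd (sub_eq (i1.trans interior_subset) (s2.trans ((interp_TPPi_iff x z).1 hγ).1)) e1
  | NTPPi =>
    exact absurd (sub_eq (i1.trans interior_subset) (s2.trans (((interp_NTPPi_iff x z).1 hγ).1.trans interior_subset))) e1
  | EQ =>
    obtain rfl := (interp_EQ_iff x z).1 hγ
    exact absurd (sub_eq (i1.trans interior_subset) s2) e1

lemma sound_NTPP_NTPP {x y z : Region} (h1 : RCC8Basic.interp .NTPP x y)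
    (h2 : RCC8Basic.interp .NTPP y z) {γ : RCC8Basic} (hγ : γ.interp x z) :
    γ ∈ tableL .NTPP .NTPP := by
  obtain ⟨i1, e1⟩ := (interp_NTPP_iff x y).1 h1
  obtain ⟨i2, e2⟩ := (interp_NTPP_iff y z).1 h2
  have s2' : y.1 ⊆ z.1 := i2.trans interior_subset
  have ISUB : x.1 ⊆ interior z.1 := i1.trans (interior_mono s2')
  have SUB : x.1 ⊆ z.1 := ISUB.trans interior_subset
  cases γ with
  | DC =>
    exact absurd (mts_sub SUB) ((interp_DC_iff x z).1 hγ)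
  | EC =>
    exact absurd (ov_common subset_rfl SUB) ((interp_EC_iff x z).1 hγ).2
  | PO =>
    exact absurd SUB ((interp_PO_iff x z).1 hγ).2.1
  | TPP =>
    exact absurd ISUB ((interp_TPP_iff x z).1 hγ).2.2
  | NTPP => decide
  | TPPi =>
    exact absurd (sub_eq (i1.trans interior_subset) (s2'.trans ((interp_TPPi_iff x z).1 hγ).1)) e1
  | NTPPi =>
    exact absurd (sub_eq (i1.trans interior_subset) (s2'.trans (((interp_NTPPi_iff x z).1 hγ).1.trans interior_subset))) e1
  | EQ =>
    obtain rfl := (interp_EQ_iff x z).1 hγ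
    exact absurd (sub_eq (i1.trans interior_subset) s2') e1

lemma sound_NTPP_TPPi {x y z : Region} (h1 : RCC8Basic.interp .NTPP x y)
    (h2 : RCC8Basic.interp .TPPi y z) {γ : RCC8Basic} (hγ : γ.interp x z) :
    γ ∈ tableL .NTPP .TPPi := by
  obtain ⟨i1, e1⟩ := (interp_NTPP_iff x y).1 h1
  obtain ⟨s2, e2, i2⟩ := (interp_TPPi_iff y z).1 h2
  cases γ with
  | DC => decide
  | EC => decide
  | PO => decide
  | TPP => decide
  | NTPP => decide
  | TPPi =>
    exact absurd (((interp_TPPi_iff x z).1 hγ).1.trans i1) i2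
  | NTPPi =>
    exact absurd ((((interp_NTPPi_iff x z).1 hγ).1.trans interior_subset).trans i1) i2
  | EQ =>
    obtain rfl := (interp_EQ_iff x z).1 hγ
    exact absurd i1 i2

lemma sound_TPPi_DC {x y z : Region} (h1 : RCC8Basic.interp .TPPi x y)
    (h2 : RCC8Basic.interp .DC y z) {γ : RCC8Basic} (hγ : γ.interp x z) :
    γ ∈ tableL .TPPi .DC := by
  obtain ⟨s1, e1, i1⟩ := (interp_TPPi_iff x y).1 h1
  have d2 := (interp_DC_iff y z).1 h2
  cases γ with
  | DC => decide
  | EC => decide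
  | PO => decide
  | TPP =>
    exact absurd (mts_mono_r (mts_sub s1) ((interp_TPP_iff x z).1 hγ).1) d2
  | NTPP =>
    exact absurd (mts_mono_r (mts_sub s1) (((interp_NTPP_iff x z).1 hγ).1.trans interior_subset)) d2
  | TPPi => decide
  | NTPPi => decide
  | EQ =>
    obtain rfl := (interp_EQ_iff x z).1 hγ
    exact absurd (mts_sub s1) d2

lemma sound_TPPi_EC {x y z : Region} (h1 : RCC8Basic.interp .TPPi x y)
    (h2 : RCC8Basic.interp .EC y z) {γ : RCC8Basic} (hγ : γ.interp x z) :
    γ ∈ tableL .TPPi .EC := by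
  obtain ⟨s1, e1, i1⟩ := (interp_TPPi_iff x y).1 h1
  obtain ⟨m2, o2⟩ := (interp_EC_iff y z).1 h2
  cases γ with
  | DC =>
    exact absurd (mts_mono_l m2 s1) ((interp_DC_iff x z).1 hγ)
  | EC => decide
  | PO => decide
  | TPP =>
    exact absurd (ov_common subset_rfl (s1.trans ((interp_TPP_iff x z).1 hγ).1)) o2
  | NTPP =>
    exact absurd (ov_common subset_rfl (s1.trans (((interp_NTPP_iff x z).1 hγ).1.trans interior_subset))) o2
  | TPPi => decide
  | NTPPi => decide
  | EQ =>
    obtain rfl := (interp_EQ_iff x z).1 hγ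
    exact absurd (ov_common subset_rfl s1) o2

lemma sound_TPPi_PO {x y z : Region} (h1 : RCC8Basic.interp .TPPi x y)
    (h2 : RCC8Basic.interp .PO y z) {γ : RCC8Basic} (hγ : γ.interp x z) :
    γ ∈ tableL .TPPi .PO := by
  obtain ⟨s1, e1, i1⟩ := (interp_TPPi_iff x y).1 h1
  obtain ⟨v2, s2, t2⟩ := (interp_PO_iff y z).1 h2
  have OV : (interior x.1 ∩ interior z.1).Nonempty := ov_mono_l v2 s1
  cases γ with
  | DC =>
    exact absurd (mts_of_ov OV) ((interp_DC_iff x z).1 hγ)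
  | EC =>
    exact absurd OV ((interp_EC_iff x z).1 hγ).2
  | PO => decide
  | TPP =>
    exact absurd (s1.trans ((interp_TPP_iff x z).1 hγ).1) s2
  | NTPP =>
    exact absurd (s1.trans (((interp_NTPP_iff x z).1 hγ).1.trans interior_subset)) s2
  | TPPi => decide
  | NTPPi => decide
  | EQ =>
    obtain rfl := (interp_EQ_iff x z).1 hγ
    exact absurd s1 s2

lemma sound_TPPi_TPP {x y z : Region} (h1 : RCC8Basic.interp .TPPi x y)
    (h2 : RCC8Basic.interp .TPP y z) {γ : RCC8Basic} (hγ : γ.interp x z) :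
    γ ∈ tableL .TPPi .TPP := by
  obtain ⟨s1, e1, i1⟩ := (interp_TPPi_iff x y).1 h1
  obtain ⟨s2, e2, i2⟩ := (interp_TPP_iff y z).1 h2
  have OV : (interior x.1 ∩ interior z.1).Nonempty := ov_common s1 s2
  cases γ with
  | DC =>
    exact absurd (mts_of_ov OV) ((interp_DC_iff x z).1 hγ)
  | EC =>
    exact absurd OV ((interp_EC_iff x z).1 hγ).2
  | PO => decide
  | TPP => decide
  | NTPP =>
    exact absurd (s1.trans ((interp_NTPP_iff x z).1 hγ).1) i2
  | TPPi => decide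
  | NTPPi =>
    exact absurd (s2.trans ((interp_NTPPi_iff x z).1 hγ).1) i1
  | EQ => decide

lemma sound_TPPi_NTPP {x y z : Region} (h1 : RCC8Basic.interp .TPPi x y)
    (h2 : RCC8Basic.interp .NTPP y z) {γ : RCC8Basic} (hγ : γ.interp x z) :
    γ ∈ tableL .TPPi .NTPP := by
  obtain ⟨s1, e1, i1⟩ := (interp_TPPi_iff x y).1 h1
  obtain ⟨i2, e2⟩ := (interp_NTPP_iff y z).1 h2
  have OV : (interior x.1 ∩ interior z.1).Nonempty := ov_common s1 (i2.trans interior_subset)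
  cases γ with
  | DC =>
    exact absurd (mts_of_ov OV) ((interp_DC_iff x z).1 hγ)
  | EC =>
    exact absurd OV ((interp_EC_iff x z).1 hγ).2
  | PO => decide
  | TPP => decide
  | NTPP => decide
  | TPPi =>
    exact absurd (i2.trans (interior_mono ((interp_TPPi_iff x z).1 hγ).1)) i1
  | NTPPi =>
    exact absurd (i2.trans (interior_mono (((interp_NTPPi_iff x z).1 hγ).1.trans interior_subset))) i1
  | EQ =>
    obtain rfl := (interp_EQ_iff x z).1 hγ
    exact absurd i2 i1

lemma sound_TPPi_TPPi {x y z : Region} (h1 : RCC8Basic.interp .TPPi x y)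
    (h2 : RCC8Basic.interp .TPPi y z) {γ : RCC8Basic} (hγ : γ.interp x z) :
    γ ∈ tableL .TPPi .TPPi := by
  obtain ⟨s1, e1, i1⟩ := (interp_TPPi_iff x y).1 h1
  obtain ⟨s2, e2, i2⟩ := (interp_TPPi_iff y z).1 h2
  have SUB : z.1 ⊆ x.1 := s2.trans s1
  cases γ with
  | DC =>
    exact absurd (mts_swap (mts_sub SUB)) ((interp_DC_iff x z).1 hγ)
  | EC =>
    exact absurd (ov_common SUB subset_rfl) ((interp_EC_iff x z).1 hγ).2
  | PO =>
    exact absurd SUB ((interp_PO_iff x z).1 hγ).2.2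
  | TPP =>
    exact absurd (sub_eq (((interp_TPP_iff x z).1 hγ).1.trans s2) s1) e1
  | NTPP =>
    exact absurd (sub_eq ((((interp_NTPP_iff x z).1 hγ).1.trans interior_subset).trans s2) s1) e1
  | TPPi => decide
  | NTPPi => decide
  | EQ =>
    obtain rfl := (interp_EQ_iff x z).1 hγ
    exact absurd (sub_eq s2 s1) e1

lemma sound_TPPi_NTPPi {x y z : Region} (h1 : RCC8Basic.interp .TPPi x y)
    (h2 : RCC8Basic.interp .NTPPi y z) {γ : RCC8Basic} (hγ : γ.interp x z) :
    γ ∈ tableL .TPPi .NTPPi := by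
  obtain ⟨s1, e1, i1⟩ := (interp_TPPi_iff x y).1 h1
  obtain ⟨i2, e2⟩ := (interp_NTPPi_iff y z).1 h2
  have ISUB : z.1 ⊆ interior x.1 := i2.trans (interior_mono s1)
  have SUB : z.1 ⊆ x.1 := ISUB.trans interior_subset
  cases γ with
  | DC =>
    exact absurd (mts_swap (mts_sub SUB)) ((interp_DC_iff x z).1 hγ)
  | EC =>
    exact absurd (ov_common SUB subset_rfl) ((interp_EC_iff x z).1 hγ).2
  | PO =>
    exact absurd SUB ((interp_PO_iff x z).1 hγ).2.2
  | TPP =>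
    exact absurd (sub_eq (((interp_TPP_iff x z).1 hγ).1.trans (i2.trans interior_subset)) s1) e1
  | NTPP =>
    exact absurd (sub_eq ((((interp_NTPP_iff x z).1 hγ).1.trans interior_subset).trans (i2.trans interior_subset)) s1) e1
  | TPPi =>
    exact absurd ISUB ((interp_TPPi_iff x z).1 hγ).2.2
  | NTPPi => decide
  | EQ =>
    obtain rfl := (interp_EQ_iff x z).1 hγ
    exact absurd (sub_eq (i2.trans interior_subset) s1) e1

lemma sound_NTPPi_DC {x y z : Region} (h1 : RCC8Basic.interp .NTPPi x y)
    (h2 : RCC8Basic.interp .DC y z) {γ : RCC8Basic} (hγ : γ.interp x z) :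
    γ ∈ tableL .NTPPi .DC := by
  obtain ⟨i1, e1⟩ := (interp_NTPPi_iff x y).1 h1
  have d2 := (interp_DC_iff y z).1 h2
  have s1' : y.1 ⊆ x.1 := i1.trans interior_subset
  cases γ with
  | DC => decide
  | EC => decide
  | PO => decide
  | TPP =>
    exact absurd (mts_mono_r (mts_sub s1') ((interp_TPP_iff x z).1 hγ).1) d2
  | NTPP =>
    exact absurd (mts_mono_r (mts_sub s1') (((interp_NTPP_iff x z).1 hγ).1.trans interior_subset)) d2
  | TPPi => decide
  | NTPPi => decide
  | EQ =>
    obtain rfl := (interp_EQ_iff x z).1 hγ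
    exact absurd (mts_sub s1') d2

lemma sound_NTPPi_EC {x y z : Region} (h1 : RCC8Basic.interp .NTPPi x y)
    (h2 : RCC8Basic.interp .EC y z) {γ : RCC8Basic} (hγ : γ.interp x z) :
    γ ∈ tableL .NTPPi .EC := by
  obtain ⟨i1, e1⟩ := (interp_NTPPi_iff x y).1 h1
  obtain ⟨m2, o2⟩ := (interp_EC_iff y z).1 h2
  have s1' : y.1 ⊆ x.1 := i1.trans interior_subset
  have OV : (interior x.1 ∩ interior z.1).Nonempty := ov_swap (gTouch (mts_swap m2) i1)
  cases γ with
  | DC =>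
    exact absurd (mts_of_ov OV) ((interp_DC_iff x z).1 hγ)
  | EC =>
    exact absurd OV ((interp_EC_iff x z).1 hγ).2
  | PO => decide
  | TPP =>
    exact absurd (ov_common subset_rfl (s1'.trans ((interp_TPP_iff x z).1 hγ).1)) o2
  | NTPP =>
    exact absurd (ov_common subset_rfl (s1'.trans (((interp_NTPP_iff x z).1 hγ).1.trans interior_subset))) o2
  | TPPi => decide
  | NTPPi => decide
  | EQ =>
    obtain rfl := (interp_EQ_iff x z).1 hγ
    exact absurd (ov_common subset_rfl s1') o2

lemma sound_NTPPi_PO {x y z : Region} (h1 : RCC8Basic.interp .NTPPi x y)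
    (h2 : RCC8Basic.interp .PO y z) {γ : RCC8Basic} (hγ : γ.interp x z) :
    γ ∈ tableL .NTPPi .PO := by
  obtain ⟨i1, e1⟩ := (interp_NTPPi_iff x y).1 h1
  obtain ⟨v2, s2, t2⟩ := (interp_PO_iff y z).1 h2
  have s1' : y.1 ⊆ x.1 := i1.trans interior_subset
  have OV : (interior x.1 ∩ interior z.1).Nonempty := ov_mono_l v2 s1'
  cases γ with
  | DC =>
    exact absurd (mts_of_ov OV) ((interp_DC_iff x z).1 hγ)
  | EC =>
    exact absurd OV ((interp_EC_iff x z).1 hγ).2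
  | PO => decide
  | TPP =>
    exact absurd (s1'.trans ((interp_TPP_iff x z).1 hγ).1) s2
  | NTPP =>
    exact absurd (s1'.trans (((interp_NTPP_iff x z).1 hγ).1.trans interior_subset)) s2
  | TPPi => decide
  | NTPPi => decide
  | EQ =>
    obtain rfl := (interp_EQ_iff x z).1 hγ
    exact absurd s1' s2

lemma sound_NTPPi_TPP {x y z : Region} (h1 : RCC8Basic.interp .NTPPi x y)
    (h2 : RCC8Basic.interp .TPP y z) {γ : RCC8Basic} (hγ : γ.interp x z) :
    γ ∈ tableL .NTPPi .TPP := by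
  obtain ⟨i1, e1⟩ := (interp_NTPPi_iff x y).1 h1
  obtain ⟨s2, e2, i2⟩ := (interp_TPP_iff y z).1 h2
  have s1' : y.1 ⊆ x.1 := i1.trans interior_subset
  have OV : (interior x.1 ∩ interior z.1).Nonempty := ov_common s1' s2
  cases γ with
  | DC =>
    exact absurd (mts_of_ov OV) ((interp_DC_iff x z).1 hγ)
  | EC =>
    exact absurd OV ((interp_EC_iff x z).1 hγ).2
  | PO => decide
  | TPP =>
    exact absurd (i1.trans (interior_mono ((interp_TPP_iff x z).1 hγ).1)) i2
  | NTPP =>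
    exact absurd (i1.trans (interior_mono (((interp_NTPP_iff x z).1 hγ).1.trans interior_subset))) i2
  | TPPi => decide
  | NTPPi => decide
  | EQ =>
    obtain rfl := (interp_EQ_iff x z).1 hγ
    exact absurd i1 i2

lemma sound_NTPPi_NTPP {x y z : Region} (h1 : RCC8Basic.interp .NTPPi x y)
    (h2 : RCC8Basic.interp .NTPP y z) {γ : RCC8Basic} (hγ : γ.interp x z) :
    γ ∈ tableL .NTPPi .NTPP := by
  obtain ⟨i1, e1⟩ := (interp_NTPPi_iff x y).1 h1
  obtain ⟨i2, e2⟩ := (interp_NTPP_iff y z).1 h2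
  have OV : (interior x.1 ∩ interior z.1).Nonempty := ov_common (i1.trans interior_subset) (i2.trans interior_subset)
  cases γ with
  | DC =>
    exact absurd (mts_of_ov OV) ((interp_DC_iff x z).1 hγ)
  | EC =>
    exact absurd OV ((interp_EC_iff x z).1 hγ).2
  | PO => decide
  | TPP => decide
  | NTPP => decide
  | TPPi => decide
  | NTPPi => decide
  | EQ => decide

lemma sound_NTPPi_TPPi {x y z : Region} (h1 : RCC8Basic.interp .NTPPi x y)
    (h2 : RCC8Basic.interp .TPPi y z) {γ : RCC8Basic} (hγ : γ.interp x z) :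
    γ ∈ tableL .NTPPi .TPPi := by
  obtain ⟨i1, e1⟩ := (interp_NTPPi_iff x y).1 h1
  obtain ⟨s2, e2, i2⟩ := (interp_TPPi_iff y z).1 h2
  have ISUB : z.1 ⊆ interior x.1 := s2.trans i1
  have SUB : z.1 ⊆ x.1 := ISUB.trans interior_subset
  cases γ with
  | DC =>
    exact absurd (mts_swap (mts_sub SUB)) ((interp_DC_iff x z).1 hγ)
  | EC =>
    exact absurd (ov_common SUB subset_rfl) ((interp_EC_iff x z).1 hγ).2
  | PO =>
    exact absurd SUB ((interp_PO_iff x z).1 hγ).2.2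
  | TPP =>
    exact absurd (sub_eq (((interp_TPP_iff x z).1 hγ).1.trans s2) (i1.trans interior_subset)) e1
  | NTPP =>
    exact absurd (sub_eq ((((interp_NTPP_iff x z).1 hγ).1.trans interior_subset).trans s2) (i1.trans interior_subset)) e1
  | TPPi =>
    exact absurd ISUB ((interp_TPPi_iff x z).1 hγ).2.2
  | NTPPi => decide
  | EQ =>
    obtain rfl := (interp_EQ_iff x z).1 hγ
    exact absurd (sub_eq s2 (i1.trans interior_subset)) e1

lemma sound_NTPPi_NTPPi {x y z : Region} (h1 : RCC8Basic.interp .NTPPi x y)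
    (h2 : RCC8Basic.interp .NTPPi y z) {γ : RCC8Basic} (hγ : γ.interp x z) :
    γ ∈ tableL .NTPPi .NTPPi := by
  obtain ⟨i1, e1⟩ := (interp_NTPPi_iff x y).1 h1
  obtain ⟨i2, e2⟩ := (interp_NTPPi_iff y z).1 h2
  have ISUB : z.1 ⊆ interior x.1 := (i2.trans interior_subset).trans i1
  have SUB : z.1 ⊆ x.1 := ISUB.trans interior_subset
  cases γ with
  | DC =>
    exact absurd (mts_swap (mts_sub SUB)) ((interp_DC_iff x z).1 hγ)
  | EC =>
    exact absurd (ov_common SUB subset_rfl) ((interp_EC_iff x z).1 hγ).2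
  | PO =>
    exact absurd SUB ((interp_PO_iff x z).1 hγ).2.2
  | TPP =>
    exact absurd (sub_eq (((interp_TPP_iff x z).1 hγ).1.trans (i2.trans interior_subset)) (i1.trans interior_subset)) e1
  | NTPP =>
    exact absurd (sub_eq ((((interp_NTPP_iff x z).1 hγ).1.trans interior_subset).trans (i2.trans interior_subset)) (i1.trans interior_subset)) e1
  | TPPi =>
    exact absurd ISUB ((interp_TPPi_iff x z).1 hγ).2.2
  | NTPPi => decide
  | EQ =>
    obtain rfl := (interp_EQ_iff x z).1 hγ
    exact absurd (sub_eq (i2.trans interior_subset) (i1.trans interior_subset)) e1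


theorem sound {b1 b2 γ : RCC8Basic} {x y z : Region} (h1 : b1.interp x y)
    (h2 : b2.interp y z) (hγ : γ.interp x z) : γ ∈ tableL b1 b2 := by
  cases b1 with
  | DC =>
    cases b2 with
    | DC => cases γ <;> decide
    | EC => exact sound_DC_EC h1 h2 hγ
    | PO => exact sound_DC_PO h1 h2 hγ
    | TPP => exact sound_DC_TPP h1 h2 hγ
    | NTPP => exact sound_DC_NTPP h1 h2 hγ
    | TPPi => exact sound_DC_TPPi h1 h2 hγ
    | NTPPi => exact sound_DC_NTPPi h1 h2 hγ
    | EQ =>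
      obtain rfl := (interp_EQ_iff y z).1 h2
      obtain rfl := interp_unique hγ h1
      decide
  | EC =>
    cases b2 with
    | DC => exact sound_EC_DC h1 h2 hγ
    | EC => exact sound_EC_EC h1 h2 hγ
    | PO => exact sound_EC_PO h1 h2 hγ
    | TPP => exact sound_EC_TPP h1 h2 hγ
    | NTPP => exact sound_EC_NTPP h1 h2 hγ
    | TPPi => exact sound_EC_TPPi h1 h2 hγ
    | NTPPi => exact sound_EC_NTPPi h1 h2 hγ
    | EQ =>
      obtain rfl := (interp_EQ_iff y z).1 h2
      obtain rfl := interp_unique hγ h1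
      decide
  | PO =>
    cases b2 with
    | DC => exact sound_PO_DC h1 h2 hγ
    | EC => exact sound_PO_EC h1 h2 hγ
    | PO => cases γ <;> decide
    | TPP => exact sound_PO_TPP h1 h2 hγ
    | NTPP => exact sound_PO_NTPP h1 h2 hγ
    | TPPi => exact sound_PO_TPPi h1 h2 hγ
    | NTPPi => exact sound_PO_NTPPi h1 h2 hγ
    | EQ =>
      obtain rfl := (interp_EQ_iff y z).1 h2
      obtain rfl := interp_unique hγ h1
      decide
  | TPP =>
    cases b2 with
    | DC => exact sound_TPP_DC h1 h2 hγ
    | EC => exact sound_TPP_EC h1 h2 hγ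
    | PO => exact sound_TPP_PO h1 h2 hγ
    | TPP => exact sound_TPP_TPP h1 h2 hγ
    | NTPP => exact sound_TPP_NTPP h1 h2 hγ
    | TPPi => exact sound_TPP_TPPi h1 h2 hγ
    | NTPPi => exact sound_TPP_NTPPi h1 h2 hγ
    | EQ =>
      obtain rfl := (interp_EQ_iff y z).1 h2
      obtain rfl := interp_unique hγ h1
      decide
  | NTPP =>
    cases b2 with
    | DC => exact sound_NTPP_DC h1 h2 hγ
    | EC => exact sound_NTPP_EC h1 h2 hγ
    | PO => exact sound_NTPP_PO h1 h2 hγ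
    | TPP => exact sound_NTPP_TPP h1 h2 hγ
    | NTPP => exact sound_NTPP_NTPP h1 h2 hγ
    | TPPi => exact sound_NTPP_TPPi h1 h2 hγ
    | NTPPi => cases γ <;> decide
    | EQ =>
      obtain rfl := (interp_EQ_iff y z).1 h2
      obtain rfl := interp_unique hγ h1
      decide
  | TPPi =>
    cases b2 with
    | DC => exact sound_TPPi_DC h1 h2 hγ
    | EC => exact sound_TPPi_EC h1 h2 hγ
    | PO => exact sound_TPPi_PO h1 h2 hγ
    | TPP => exact sound_TPPi_TPP h1 h2 hγ
    | NTPP => exact sound_TPPi_NTPP h1 h2 hγ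
    | TPPi => exact sound_TPPi_TPPi h1 h2 hγ
    | NTPPi => exact sound_TPPi_NTPPi h1 h2 hγ
    | EQ =>
      obtain rfl := (interp_EQ_iff y z).1 h2
      obtain rfl := interp_unique hγ h1
      decide
  | NTPPi =>
    cases b2 with
    | DC => exact sound_NTPPi_DC h1 h2 hγ
    | EC => exact sound_NTPPi_EC h1 h2 hγ
    | PO => exact sound_NTPPi_PO h1 h2 hγ
    | TPP => exact sound_NTPPi_TPP h1 h2 hγ
    | NTPP => exact sound_NTPPi_NTPP h1 h2 hγ
    | TPPi => exact sound_NTPPi_TPPi h1 h2 hγ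
    | NTPPi => exact sound_NTPPi_NTPPi h1 h2 hγ
    | EQ =>
      obtain rfl := (interp_EQ_iff y z).1 h2
      obtain rfl := interp_unique hγ h1
      decide
  | EQ =>
    obtain rfl := (interp_EQ_iff x y).1 h1
    obtain rfl := interp_unique hγ h2
    cases γ <;> decide


section Boxes
open Set

/-- an axis-parallel box with integer corners. -/
structure IBox where
  a : ℤ
  b : ℤ
  c : ℤ
  d : ℤ
deriving DecidableEq

def IBox.validB (X : IBox) : Bool := X.a < X.b && X.c < X.d

noncomputable def IBox.reg (X : IBox) (h : X.validB = true) : Region :=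
  mkBox (X.a : ℝ) X.b X.c X.d
    (by simp only [IBox.validB, Bool.and_eq_true, decide_eq_true_eq] at h
        exact_mod_cast h.1)
    (by simp only [IBox.validB, Bool.and_eq_true, decide_eq_true_eq] at h
        exact_mod_cast h.2)

lemma IBox.reg_coe (X : IBox) (h : X.validB = true) :
    (X.reg h).1 = Icc (X.a : ℝ) X.b ×ˢ Icc (X.c : ℝ) X.d := rfl

lemma IBox.valid_real₁ (X : IBox) (h : X.validB = true) : (X.a : ℝ) < X.b := by
  simp only [IBox.validB, Bool.and_eq_true, decide_eq_true_eq] at h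
  exact_mod_cast h.1

lemma IBox.valid_real₂ (X : IBox) (h : X.validB = true) : (X.c : ℝ) < X.d := by
  simp only [IBox.validB, Bool.and_eq_true, decide_eq_true_eq] at h
  exact_mod_cast h.2

def IBox.subB (X Y : IBox) : Bool :=
  Y.a ≤ X.a && X.b ≤ Y.b && Y.c ≤ X.c && X.d ≤ Y.d

def IBox.ssubB (X Y : IBox) : Bool :=
  Y.a < X.a && X.b < Y.b && Y.c < X.c && X.d < Y.d

def IBox.meetB (X Y : IBox) : Bool :=
  X.a ≤ Y.b && Y.a ≤ X.b && X.c ≤ Y.d && Y.c ≤ X.d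

def IBox.ovB (X Y : IBox) : Bool :=
  X.a < Y.b && Y.a < X.b && X.c < Y.d && Y.c < X.d

/-- compute the basic RCC8 relation between two integer boxes. -/
def brel (X Y : IBox) : RCC8Basic :=
  if X = Y then .EQ
  else if X.subB Y then (if X.ssubB Y then .NTPP else .TPP)
  else if Y.subB X then (if Y.ssubB X then .NTPPi else .TPPi)
  else if X.ovB Y then .PO
  else if X.meetB Y then .EC
  else .DC

/- ### real interval lemmas -/

lemma Icc_prod_subset_iff {a1 b1 c1 d1 a2 b2 c2 d2 : ℝ} (h1 : a1 ≤ b1) (h2 : c1 ≤ d1) :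
    Icc a1 b1 ×ˢ Icc c1 d1 ⊆ Icc a2 b2 ×ˢ Icc c2 d2 ↔
      a2 ≤ a1 ∧ b1 ≤ b2 ∧ c2 ≤ c1 ∧ d1 ≤ d2 := by
  rw [Set.prod_subset_prod_iff]
  constructor
  · rintro (⟨hs, ht⟩ | h | h)
    · obtain ⟨u1, u2⟩ := (Icc_subset_Icc_iff h1).1 hs
      obtain ⟨u3, u4⟩ := (Icc_subset_Icc_iff h2).1 ht
      exact ⟨u1, u2, u3, u4⟩
    · exact absurd h (Set.nonempty_Icc.2 h1).ne_empty
    · exact absurd h (Set.nonempty_Icc.2 h2).ne_empty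
  · rintro ⟨u1, u2, u3, u4⟩
    exact Or.inl ⟨Icc_subset_Icc u1 u2, Icc_subset_Icc u3 u4⟩

lemma Icc_prod_mts_iff {a1 b1 c1 d1 a2 b2 c2 d2 : ℝ} (h1 : a1 ≤ b1) (h2 : c1 ≤ d1)
    (h3 : a2 ≤ b2) (h4 : c2 ≤ d2) :
    ((Icc a1 b1 ×ˢ Icc c1 d1) ∩ (Icc a2 b2 ×ˢ Icc c2 d2)).Nonempty ↔
      a1 ≤ b2 ∧ a2 ≤ b1 ∧ c1 ≤ d2 ∧ c2 ≤ d1 := by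
  rw [Set.prod_inter_prod, Set.prod_nonempty_iff, Icc_inter_Icc, Icc_inter_Icc,
    Set.nonempty_Icc, Set.nonempty_Icc, sup_le_iff, sup_le_iff, le_inf_iff, le_inf_iff,
    le_inf_iff, le_inf_iff]
  constructor
  · rintro ⟨⟨⟨_, u1⟩, u2, _⟩, ⟨_, u3⟩, u4, _⟩
    exact ⟨u1, u2, u3, u4⟩
  · rintro ⟨u1, u2, u3, u4⟩
    exact ⟨⟨⟨h1, u1⟩, u2, h3⟩, ⟨h2, u3⟩, u4, h4⟩

lemma Icc_prod_interior_mts_iff {a1 b1 c1 d1 a2 b2 c2 d2 : ℝ} (h1 : a1 < b1) (h2 : c1 < d1)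
    (h3 : a2 < b2) (h4 : c2 < d2) :
    (interior (Icc a1 b1 ×ˢ Icc c1 d1) ∩ interior (Icc a2 b2 ×ˢ Icc c2 d2)).Nonempty ↔
      a1 < b2 ∧ a2 < b1 ∧ c1 < d2 ∧ c2 < d1 := by
  rw [interior_prod_eq, interior_prod_eq, interior_Icc, interior_Icc, interior_Icc,
    interior_Icc, Set.prod_inter_prod, Set.prod_nonempty_iff, Ioo_inter_Ioo, Ioo_inter_Ioo,
    Set.nonempty_Ioo, Set.nonempty_Ioo, sup_lt_iff, sup_lt_iff, lt_inf_iff, lt_inf_iff,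
    lt_inf_iff, lt_inf_iff]
  constructor
  · rintro ⟨⟨⟨_, u1⟩, u2, _⟩, ⟨_, u3⟩, u4, _⟩
    exact ⟨u1, u2, u3, u4⟩
  · rintro ⟨u1, u2, u3, u4⟩
    exact ⟨⟨⟨h1, u1⟩, u2, h3⟩, ⟨h2, u3⟩, u4, h4⟩

lemma Icc_prod_interior_subset_iff {a1 b1 c1 d1 a2 b2 c2 d2 : ℝ}
    (h1 : a1 ≤ b1) (h2 : c1 ≤ d1) :
    Icc a1 b1 ×ˢ Icc c1 d1 ⊆ interior (Icc a2 b2 ×ˢ Icc c2 d2) ↔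
      a2 < a1 ∧ b1 < b2 ∧ c2 < c1 ∧ d1 < d2 := by
  rw [interior_prod_eq, interior_Icc, interior_Icc, Set.prod_subset_prod_iff]
  constructor
  · rintro (⟨hs, ht⟩ | h | h)
    · obtain ⟨u1, u2⟩ := (Set.Icc_subset_Ioo_iff h1).1 hs
      obtain ⟨u3, u4⟩ := (Set.Icc_subset_Ioo_iff h2).1 ht
      exact ⟨u1, u2, u3, u4⟩
    · exact absurd h (Set.nonempty_Icc.2 h1).ne_empty
    · exact absurd h (Set.nonempty_Icc.2 h2).ne_empty
  · rintro ⟨u1, u2, u3, u4⟩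
    exact Or.inl ⟨Set.Icc_subset_Ioo u1 u2, Set.Icc_subset_Ioo u3 u4⟩

/- ### box-level relation lemmas -/

lemma box_sub_iff (X Y : IBox) (hX : X.validB = true) (hY : Y.validB = true) :
    (X.reg hX).1 ⊆ (Y.reg hY).1 ↔ X.subB Y = true := by
  rw [IBox.reg_coe, IBox.reg_coe,
    Icc_prod_subset_iff (X.valid_real₁ hX).le (X.valid_real₂ hX).le]
  simp only [IBox.subB, Bool.and_eq_true, decide_eq_true_eq]
  constructor
  · rintro ⟨u1, u2, u3, u4⟩
    exact ⟨⟨⟨by exact_mod_cast u1, by exact_mod_cast u2⟩, by exact_mod_cast u3⟩,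
      by exact_mod_cast u4⟩
  · rintro ⟨⟨⟨u1, u2⟩, u3⟩, u4⟩
    exact ⟨by exact_mod_cast u1, by exact_mod_cast u2, by exact_mod_cast u3,
      by exact_mod_cast u4⟩

lemma box_mts_iff (X Y : IBox) (hX : X.validB = true) (hY : Y.validB = true) :
    ((X.reg hX).1 ∩ (Y.reg hY).1).Nonempty ↔ X.meetB Y = true := by
  rw [IBox.reg_coe, IBox.reg_coe,
    Icc_prod_mts_iff (X.valid_real₁ hX).le (X.valid_real₂ hX).le
      (Y.valid_real₁ hY).le (Y.valid_real₂ hY).le]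
  simp only [IBox.meetB, Bool.and_eq_true, decide_eq_true_eq]
  constructor
  · rintro ⟨u1, u2, u3, u4⟩
    exact ⟨⟨⟨by exact_mod_cast u1, by exact_mod_cast u2⟩, by exact_mod_cast u3⟩,
      by exact_mod_cast u4⟩
  · rintro ⟨⟨⟨u1, u2⟩, u3⟩, u4⟩
    exact ⟨by exact_mod_cast u1, by exact_mod_cast u2, by exact_mod_cast u3,
      by exact_mod_cast u4⟩

lemma box_ov_iff (X Y : IBox) (hX : X.validB = true) (hY : Y.validB = true) :
    (interior (X.reg hX).1 ∩ interior (Y.reg hY).1).Nonempty ↔ X.ovB Y = true := by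
  rw [IBox.reg_coe, IBox.reg_coe,
    Icc_prod_interior_mts_iff (X.valid_real₁ hX) (X.valid_real₂ hX)
      (Y.valid_real₁ hY) (Y.valid_real₂ hY)]
  simp only [IBox.ovB, Bool.and_eq_true, decide_eq_true_eq]
  constructor
  · rintro ⟨u1, u2, u3, u4⟩
    exact ⟨⟨⟨by exact_mod_cast u1, by exact_mod_cast u2⟩, by exact_mod_cast u3⟩,
      by exact_mod_cast u4⟩
  · rintro ⟨⟨⟨u1, u2⟩, u3⟩, u4⟩
    exact ⟨by exact_mod_cast u1, by exact_mod_cast u2, by exact_mod_cast u3,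
      by exact_mod_cast u4⟩

lemma box_isub_iff (X Y : IBox) (hX : X.validB = true) (hY : Y.validB = true) :
    (X.reg hX).1 ⊆ interior (Y.reg hY).1 ↔ X.ssubB Y = true := by
  rw [IBox.reg_coe, IBox.reg_coe,
    Icc_prod_interior_subset_iff (X.valid_real₁ hX).le (X.valid_real₂ hX).le]
  simp only [IBox.ssubB, Bool.and_eq_true, decide_eq_true_eq]
  constructor
  · rintro ⟨u1, u2, u3, u4⟩
    exact ⟨⟨⟨by exact_mod_cast u1, by exact_mod_cast u2⟩, by exact_mod_cast u3⟩,
      by exact_mod_cast u4⟩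
  · rintro ⟨⟨⟨u1, u2⟩, u3⟩, u4⟩
    exact ⟨by exact_mod_cast u1, by exact_mod_cast u2, by exact_mod_cast u3,
      by exact_mod_cast u4⟩

lemma box_ne (X Y : IBox) (hX : X.validB = true) (hY : Y.validB = true)
    (h : X ≠ Y) : ¬ X.reg hX = Y.reg hY := by
  intro he
  apply h
  have h1 : (X.reg hX).1 ⊆ (Y.reg hY).1 := by rw [he]
  have h2 : (Y.reg hY).1 ⊆ (X.reg hX).1 := by rw [he]
  rw [box_sub_iff X Y hX hY] at h1
  rw [box_sub_iff Y X hY hX] at h2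
  simp only [IBox.subB, Bool.and_eq_true, decide_eq_true_eq] at h1 h2
  cases X; cases Y
  dsimp only at h1 h2
  simp only [IBox.mk.injEq]
  omega

theorem brel_correct (X Y : IBox) (hX : X.validB = true) (hY : Y.validB = true) :
    RCC8Basic.interp (brel X Y) (X.reg hX) (Y.reg hY) := by
  unfold brel
  split_ifs with hEQ hsub hssub hsub' hssub' hov hmeet
  · -- EQ
    subst hEQ
    exact (interp_EQ_iff _ _).2 rfl
  · -- NTPP
    exact (interp_NTPP_iff _ _).2
      ⟨(box_isub_iff X Y hX hY).2 hssub, box_ne X Y hX hY hEQ⟩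
  · -- TPP
    exact (interp_TPP_iff _ _).2
      ⟨(box_sub_iff X Y hX hY).2 hsub, box_ne X Y hX hY hEQ,
        fun hc => hssub ((box_isub_iff X Y hX hY).1 hc)⟩
  · -- NTPPi
    exact (interp_NTPPi_iff _ _).2
      ⟨(box_isub_iff Y X hY hX).2 hssub', box_ne X Y hX hY hEQ⟩
  · -- TPPi
    exact (interp_TPPi_iff _ _).2
      ⟨(box_sub_iff Y X hY hX).2 hsub', box_ne X Y hX hY hEQ,
        fun hc => hssub' ((box_isub_iff Y X hY hX).1 hc)⟩
  · -- PO
    exact (interp_PO_iff _ _).2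
      ⟨(box_ov_iff X Y hX hY).2 hov,
        fun hc => hsub ((box_sub_iff X Y hX hY).1 hc),
        fun hc => hsub' ((box_sub_iff Y X hY hX).1 hc)⟩
  · -- EC
    exact (interp_EC_iff _ _).2
      ⟨(box_mts_iff X Y hX hY).2 hmeet,
        fun hc => hov ((box_ov_iff X Y hX hY).1 hc)⟩
  · -- DC
    exact (interp_DC_iff _ _).2 (fun hc => hmeet ((box_mts_iff X Y hX hY).1 hc))

lemma realize (X Y Z : IBox) (hX : X.validB = true) (hY : Y.validB = true)
    (hZ : Z.validB = true) :
    brel X Z ∈ RCC8Rel.comp {brel X Y} {brel Y Z} :=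
  ⟨X.reg hX, Z.reg hZ, brel_correct X Z hX hZ, Y.reg hY,
    ⟨brel X Y, rfl, brel_correct X Y hX hY⟩,
    ⟨brel Y Z, rfl, brel_correct Y Z hY hZ⟩⟩

end Boxes



instance : Fintype RCC8Basic where
  elems := ⟨(↑([.DC, .EC, .PO, .TPP, .NTPP, .TPPi, .NTPPi, .EQ] : List RCC8Basic) : Multiset RCC8Basic), by decide⟩
  complete := fun b => by cases b <;> decide

set_option maxHeartbeats 1000000 in
/-- certificate configurations witnessing realizability of every entry of the table. -/
def certs : List (IBox × IBox × IBox) := [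
  (IBox.mk 1 4 1 2, IBox.mk 1 4 1 2, IBox.mk 1 4 1 2),
  (IBox.mk 1 4 1 2, IBox.mk 4 8 0 2, IBox.mk 1 4 1 2),
  (IBox.mk 1 4 1 2, IBox.mk 1 8 3 8, IBox.mk 1 4 1 2),
  (IBox.mk 1 4 1 2, IBox.mk 3 5 1 6, IBox.mk 1 4 1 2),
  (IBox.mk 1 4 1 2, IBox.mk 1 5 1 8, IBox.mk 1 4 1 2),
  (IBox.mk 1 4 1 2, IBox.mk 0 6 0 6, IBox.mk 1 4 1 2),
  (IBox.mk 1 4 1 2, IBox.mk 2 4 1 2, IBox.mk 1 4 1 2),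
  (IBox.mk 1 4 1 2, IBox.mk 1 4 1 2, IBox.mk 4 8 0 2),
  (IBox.mk 1 4 1 2, IBox.mk 4 8 0 2, IBox.mk 4 8 0 2),
  (IBox.mk 1 4 1 2, IBox.mk 1 8 3 8, IBox.mk 4 8 0 2),
  (IBox.mk 1 4 1 2, IBox.mk 3 5 1 6, IBox.mk 4 8 0 2),
  (IBox.mk 1 4 1 2, IBox.mk 4 6 0 2, IBox.mk 4 8 0 2),
  (IBox.mk 1 4 1 2, IBox.mk 3 6 0 1, IBox.mk 4 8 0 2),
  (IBox.mk 1 4 1 2, IBox.mk 4 7 2 3, IBox.mk 4 8 0 2),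
  (IBox.mk 1 4 1 2, IBox.mk 1 5 1 8, IBox.mk 4 8 0 2),
  (IBox.mk 1 4 1 2, IBox.mk 1 2 0 7, IBox.mk 4 8 0 2),
  (IBox.mk 1 4 1 2, IBox.mk 5 8 1 7, IBox.mk 4 8 0 2),
  (IBox.mk 1 4 1 2, IBox.mk 0 4 1 6, IBox.mk 4 8 0 2),
  (IBox.mk 1 4 1 2, IBox.mk 0 1 1 5, IBox.mk 4 8 0 2),
  (IBox.mk 1 4 1 2, IBox.mk 3 8 0 5, IBox.mk 4 8 0 2),
  (IBox.mk 1 4 1 2, IBox.mk 1 8 0 8, IBox.mk 4 8 0 2),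
  (IBox.mk 1 4 1 2, IBox.mk 7 8 1 2, IBox.mk 4 8 0 2),
  (IBox.mk 1 4 1 2, IBox.mk 3 4 1 6, IBox.mk 4 8 0 2),
  (IBox.mk 1 4 1 2, IBox.mk 7 8 2 7, IBox.mk 4 8 0 2),
  (IBox.mk 1 4 1 2, IBox.mk 0 6 0 6, IBox.mk 4 8 0 2),
  (IBox.mk 1 4 1 2, IBox.mk 4 8 0 7, IBox.mk 4 8 0 2),
  (IBox.mk 1 4 1 2, IBox.mk 0 8 0 8, IBox.mk 4 8 0 2),
  (IBox.mk 1 4 1 2, IBox.mk 2 4 1 2, IBox.mk 4 8 0 2),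
  (IBox.mk 1 4 1 2, IBox.mk 1 3 1 2, IBox.mk 4 8 0 2),
  (IBox.mk 1 4 1 2, IBox.mk 1 4 1 2, IBox.mk 1 8 3 8),
  (IBox.mk 1 4 1 2, IBox.mk 4 8 0 2, IBox.mk 1 8 3 8),
  (IBox.mk 1 4 1 2, IBox.mk 1 8 3 8, IBox.mk 1 8 3 8),
  (IBox.mk 1 4 1 2, IBox.mk 3 6 4 8, IBox.mk 1 8 3 8),
  (IBox.mk 1 4 1 2, IBox.mk 0 1 3 6, IBox.mk 1 8 3 8),
  (IBox.mk 1 4 1 2, IBox.mk 3 5 1 6, IBox.mk 1 8 3 8),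
  (IBox.mk 1 4 1 2, IBox.mk 2 5 0 2, IBox.mk 1 8 3 8),
  (IBox.mk 1 4 1 2, IBox.mk 3 5 4 7, IBox.mk 1 8 3 8),
  (IBox.mk 1 4 1 2, IBox.mk 3 7 0 3, IBox.mk 1 8 3 8),
  (IBox.mk 1 4 1 2, IBox.mk 0 8 4 8, IBox.mk 1 8 3 8),
  (IBox.mk 1 4 1 2, IBox.mk 4 7 2 3, IBox.mk 1 8 3 8),
  (IBox.mk 1 4 1 2, IBox.mk 1 5 1 8, IBox.mk 1 8 3 8),
  (IBox.mk 1 4 1 2, IBox.mk 3 6 2 4, IBox.mk 1 8 3 8),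
  (IBox.mk 1 4 1 2, IBox.mk 0 7 0 2, IBox.mk 1 8 3 8),
  (IBox.mk 1 4 1 2, IBox.mk 1 8 0 8, IBox.mk 1 8 3 8),
  (IBox.mk 1 4 1 2, IBox.mk 7 8 1 2, IBox.mk 1 8 3 8),
  (IBox.mk 1 4 1 2, IBox.mk 0 6 0 6, IBox.mk 1 8 3 8),
  (IBox.mk 1 4 1 2, IBox.mk 0 8 0 8, IBox.mk 1 8 3 8),
  (IBox.mk 1 4 1 2, IBox.mk 1 7 0 3, IBox.mk 1 8 3 8),
  (IBox.mk 1 4 1 2, IBox.mk 1 8 2 8, IBox.mk 1 8 3 8),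
  (IBox.mk 1 4 1 2, IBox.mk 0 7 0 3, IBox.mk 1 8 3 8),
  (IBox.mk 1 4 1 2, IBox.mk 2 4 1 2, IBox.mk 1 8 3 8),
  (IBox.mk 1 4 1 2, IBox.mk 0 8 3 8, IBox.mk 1 8 3 8),
  (IBox.mk 1 4 1 2, IBox.mk 3 6 1 8, IBox.mk 3 6 4 8),
  (IBox.mk 1 4 1 2, IBox.mk 0 7 0 3, IBox.mk 3 6 4 8),
  (IBox.mk 1 4 1 2, IBox.mk 1 4 1 2, IBox.mk 3 5 1 6),
  (IBox.mk 1 4 1 2, IBox.mk 4 8 0 2, IBox.mk 3 5 1 6),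
  (IBox.mk 1 4 1 2, IBox.mk 1 8 3 8, IBox.mk 3 5 1 6),
  (IBox.mk 1 4 1 2, IBox.mk 0 1 3 6, IBox.mk 3 5 1 6),
  (IBox.mk 1 4 1 2, IBox.mk 3 5 1 6, IBox.mk 3 5 1 6),
  (IBox.mk 1 4 1 2, IBox.mk 2 5 0 2, IBox.mk 3 5 1 6),
  (IBox.mk 1 4 1 2, IBox.mk 2 5 6 8, IBox.mk 3 5 1 6),
  (IBox.mk 1 4 1 2, IBox.mk 3 6 0 1, IBox.mk 3 5 1 6),
  (IBox.mk 1 4 1 2, IBox.mk 1 5 1 8, IBox.mk 3 5 1 6),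
  (IBox.mk 1 4 1 2, IBox.mk 2 5 0 7, IBox.mk 3 5 1 6),
  (IBox.mk 1 4 1 2, IBox.mk 1 2 0 7, IBox.mk 3 5 1 6),
  (IBox.mk 1 4 1 2, IBox.mk 2 3 0 4, IBox.mk 3 5 1 6),
  (IBox.mk 1 4 1 2, IBox.mk 0 7 0 2, IBox.mk 3 5 1 6),
  (IBox.mk 1 4 1 2, IBox.mk 4 5 2 4, IBox.mk 3 5 1 6),
  (IBox.mk 1 4 1 2, IBox.mk 3 4 4 5, IBox.mk 3 5 1 6),
  (IBox.mk 1 4 1 2, IBox.mk 0 1 1 5, IBox.mk 3 5 1 6),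
  (IBox.mk 1 4 1 2, IBox.mk 1 7 0 8, IBox.mk 3 5 1 6),
  (IBox.mk 1 4 1 2, IBox.mk 3 4 1 6, IBox.mk 3 5 1 6),
  (IBox.mk 1 4 1 2, IBox.mk 0 6 0 6, IBox.mk 3 5 1 6),
  (IBox.mk 1 4 1 2, IBox.mk 0 8 0 8, IBox.mk 3 5 1 6),
  (IBox.mk 1 4 1 2, IBox.mk 2 8 0 7, IBox.mk 3 5 1 6),
  (IBox.mk 1 4 1 2, IBox.mk 0 7 0 4, IBox.mk 3 5 1 6),
  (IBox.mk 1 4 1 2, IBox.mk 2 4 1 2, IBox.mk 3 5 1 6),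
  (IBox.mk 1 4 1 2, IBox.mk 1 3 1 2, IBox.mk 3 5 1 6),
  (IBox.mk 1 4 1 2, IBox.mk 3 4 1 2, IBox.mk 3 5 1 6),
  (IBox.mk 1 4 1 2, IBox.mk 1 2 1 2, IBox.mk 3 5 1 6),
  (IBox.mk 1 4 1 2, IBox.mk 1 8 3 8, IBox.mk 3 5 4 7),
  (IBox.mk 1 4 1 2, IBox.mk 1 6 1 8, IBox.mk 3 5 4 7),
  (IBox.mk 1 4 1 2, IBox.mk 0 8 0 8, IBox.mk 3 5 4 7),
  (IBox.mk 1 4 1 2, IBox.mk 2 8 2 8, IBox.mk 3 5 4 7),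
  (IBox.mk 1 4 1 2, IBox.mk 2 7 0 8, IBox.mk 3 5 4 7),
  (IBox.mk 1 4 1 2, IBox.mk 4 6 1 2, IBox.mk 3 7 0 3),
  (IBox.mk 1 4 1 2, IBox.mk 5 6 1 2, IBox.mk 3 7 0 3),
  (IBox.mk 1 4 1 2, IBox.mk 3 8 0 5, IBox.mk 4 7 2 3),
  (IBox.mk 1 4 1 2, IBox.mk 1 8 0 8, IBox.mk 4 7 2 3),
  (IBox.mk 1 4 1 2, IBox.mk 0 8 0 8, IBox.mk 4 7 2 3),
  (IBox.mk 1 4 1 2, IBox.mk 1 4 1 2, IBox.mk 1 5 1 8),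
  (IBox.mk 1 4 1 2, IBox.mk 4 8 0 2, IBox.mk 1 5 1 8),
  (IBox.mk 1 4 1 2, IBox.mk 1 8 3 8, IBox.mk 1 5 1 8),
  (IBox.mk 1 4 1 2, IBox.mk 0 1 3 6, IBox.mk 1 5 1 8),
  (IBox.mk 1 4 1 2, IBox.mk 3 5 1 6, IBox.mk 1 5 1 8),
  (IBox.mk 1 4 1 2, IBox.mk 2 5 0 2, IBox.mk 1 5 1 8),
  (IBox.mk 1 4 1 2, IBox.mk 3 5 4 7, IBox.mk 1 5 1 8),
  (IBox.mk 1 4 1 2, IBox.mk 3 6 0 1, IBox.mk 1 5 1 8),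
  (IBox.mk 1 4 1 2, IBox.mk 1 5 1 8, IBox.mk 1 5 1 8),
  (IBox.mk 1 4 1 2, IBox.mk 2 4 2 7, IBox.mk 1 5 1 8),
  (IBox.mk 1 4 1 2, IBox.mk 7 8 3 7, IBox.mk 1 5 1 8),
  (IBox.mk 1 4 1 2, IBox.mk 0 7 0 2, IBox.mk 1 5 1 8),
  (IBox.mk 1 4 1 2, IBox.mk 1 6 1 8, IBox.mk 1 5 1 8),
  (IBox.mk 1 4 1 2, IBox.mk 4 5 2 4, IBox.mk 1 5 1 8),
  (IBox.mk 1 4 1 2, IBox.mk 3 4 4 5, IBox.mk 1 5 1 8),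
  (IBox.mk 1 4 1 2, IBox.mk 1 4 1 5, IBox.mk 1 5 1 8),
  (IBox.mk 1 4 1 2, IBox.mk 0 6 0 6, IBox.mk 1 5 1 8),
  (IBox.mk 1 4 1 2, IBox.mk 0 8 0 8, IBox.mk 1 5 1 8),
  (IBox.mk 1 4 1 2, IBox.mk 2 4 1 2, IBox.mk 1 5 1 8),
  (IBox.mk 1 4 1 2, IBox.mk 3 4 1 6, IBox.mk 2 5 0 7),
  (IBox.mk 1 4 1 2, IBox.mk 3 4 1 2, IBox.mk 2 5 0 7),
  (IBox.mk 1 4 1 2, IBox.mk 4 7 4 5, IBox.mk 1 8 2 7),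
  (IBox.mk 1 4 1 2, IBox.mk 0 6 0 6, IBox.mk 1 4 1 5),
  (IBox.mk 1 4 1 2, IBox.mk 3 5 1 6, IBox.mk 1 7 0 8),
  (IBox.mk 1 4 1 2, IBox.mk 2 4 1 2, IBox.mk 1 7 0 8),
  (IBox.mk 1 4 1 2, IBox.mk 1 4 1 2, IBox.mk 0 6 0 6),
  (IBox.mk 1 4 1 2, IBox.mk 4 8 0 2, IBox.mk 0 6 0 6),
  (IBox.mk 1 4 1 2, IBox.mk 1 8 3 8, IBox.mk 0 6 0 6),
  (IBox.mk 1 4 1 2, IBox.mk 0 1 3 6, IBox.mk 0 6 0 6),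
  (IBox.mk 1 4 1 2, IBox.mk 3 5 1 6, IBox.mk 0 6 0 6),
  (IBox.mk 1 4 1 2, IBox.mk 3 7 0 3, IBox.mk 0 6 0 6),
  (IBox.mk 1 4 1 2, IBox.mk 2 5 6 8, IBox.mk 0 6 0 6),
  (IBox.mk 1 4 1 2, IBox.mk 4 6 0 2, IBox.mk 0 6 0 6),
  (IBox.mk 1 4 1 2, IBox.mk 1 5 1 8, IBox.mk 0 6 0 6),
  (IBox.mk 1 4 1 2, IBox.mk 3 4 7 8, IBox.mk 0 6 0 6),
  (IBox.mk 1 4 1 2, IBox.mk 4 5 2 4, IBox.mk 0 6 0 6),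
  (IBox.mk 1 4 1 2, IBox.mk 3 4 4 5, IBox.mk 0 6 0 6),
  (IBox.mk 1 4 1 2, IBox.mk 0 4 1 6, IBox.mk 0 6 0 6),
  (IBox.mk 1 4 1 2, IBox.mk 1 4 1 5, IBox.mk 0 6 0 6),
  (IBox.mk 1 4 1 2, IBox.mk 0 6 0 6, IBox.mk 0 6 0 6),
  (IBox.mk 1 4 1 2, IBox.mk 3 5 1 5, IBox.mk 0 6 0 6),
  (IBox.mk 1 4 1 2, IBox.mk 0 8 0 8, IBox.mk 0 6 0 6),
  (IBox.mk 1 4 1 2, IBox.mk 0 7 0 4, IBox.mk 0 6 0 6),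
  (IBox.mk 1 4 1 2, IBox.mk 0 6 0 5, IBox.mk 0 6 0 6),
  (IBox.mk 1 4 1 2, IBox.mk 2 4 1 2, IBox.mk 0 6 0 6),
  (IBox.mk 1 4 1 2, IBox.mk 1 4 1 2, IBox.mk 2 4 1 2),
  (IBox.mk 1 4 1 2, IBox.mk 4 8 0 2, IBox.mk 2 4 1 2),
  (IBox.mk 1 4 1 2, IBox.mk 1 8 3 8, IBox.mk 2 4 1 2),
  (IBox.mk 1 4 1 2, IBox.mk 3 5 1 6, IBox.mk 2 4 1 2),
  (IBox.mk 1 4 1 2, IBox.mk 2 5 0 2, IBox.mk 2 4 1 2),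
  (IBox.mk 1 4 1 2, IBox.mk 1 5 1 8, IBox.mk 2 4 1 2),
  (IBox.mk 1 4 1 2, IBox.mk 1 2 0 7, IBox.mk 2 4 1 2),
  (IBox.mk 1 4 1 2, IBox.mk 0 1 1 5, IBox.mk 2 4 1 2),
  (IBox.mk 1 4 1 2, IBox.mk 1 7 0 8, IBox.mk 2 4 1 2),
  (IBox.mk 1 4 1 2, IBox.mk 0 6 0 6, IBox.mk 2 4 1 2),
  (IBox.mk 1 4 1 2, IBox.mk 2 4 1 2, IBox.mk 2 4 1 2),
  (IBox.mk 1 4 1 2, IBox.mk 1 3 1 2, IBox.mk 2 4 1 2),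
  (IBox.mk 1 4 1 2, IBox.mk 2 3 1 2, IBox.mk 2 4 1 2),
  (IBox.mk 1 4 1 2, IBox.mk 1 2 1 2, IBox.mk 2 4 1 2),
  (IBox.mk 1 4 1 2, IBox.mk 2 4 1 2, IBox.mk 2 3 1 2),
  (IBox.mk 1 4 1 2, IBox.mk 2 5 0 7, IBox.mk 3 4 1 2),
  (IBox.mk 1 4 1 2, IBox.mk 1 2 0 7, IBox.mk 3 4 1 2),
  (IBox.mk 1 4 1 2, IBox.mk 1 2 1 2, IBox.mk 3 4 1 2),
  (IBox.mk 1 8 3 8, IBox.mk 3 5 4 7, IBox.mk 1 4 1 2),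
  (IBox.mk 1 8 3 8, IBox.mk 3 5 4 7, IBox.mk 1 8 3 8),
  (IBox.mk 1 8 3 8, IBox.mk 3 5 4 7, IBox.mk 3 6 4 8),
  (IBox.mk 1 8 3 8, IBox.mk 4 7 4 5, IBox.mk 3 6 4 8),
  (IBox.mk 1 8 3 8, IBox.mk 2 3 5 7, IBox.mk 3 6 4 8),
  (IBox.mk 1 8 3 8, IBox.mk 4 5 5 7, IBox.mk 3 6 4 8),
  (IBox.mk 1 8 3 8, IBox.mk 3 5 4 7, IBox.mk 0 1 3 6),
  (IBox.mk 1 8 3 8, IBox.mk 3 5 4 7, IBox.mk 3 5 1 6),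
  (IBox.mk 1 8 3 8, IBox.mk 3 4 4 5, IBox.mk 3 5 1 6),
  (IBox.mk 1 8 3 8, IBox.mk 5 6 5 6, IBox.mk 3 5 1 6),
  (IBox.mk 1 8 3 8, IBox.mk 6 7 5 6, IBox.mk 3 5 1 6),
  (IBox.mk 1 8 3 8, IBox.mk 1 4 1 2, IBox.mk 3 5 4 7),
  (IBox.mk 1 8 3 8, IBox.mk 1 8 3 8, IBox.mk 3 5 4 7),
  (IBox.mk 1 8 3 8, IBox.mk 3 6 4 8, IBox.mk 3 5 4 7),
  (IBox.mk 1 8 3 8, IBox.mk 0 1 3 6, IBox.mk 3 5 4 7),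
  (IBox.mk 1 8 3 8, IBox.mk 3 5 1 6, IBox.mk 3 5 4 7),
  (IBox.mk 1 8 3 8, IBox.mk 3 5 4 7, IBox.mk 3 5 4 7),
  (IBox.mk 1 8 3 8, IBox.mk 4 8 5 7, IBox.mk 3 5 4 7),
  (IBox.mk 1 8 3 8, IBox.mk 0 8 4 8, IBox.mk 3 5 4 7),
  (IBox.mk 1 8 3 8, IBox.mk 5 8 5 8, IBox.mk 3 5 4 7),
  (IBox.mk 1 8 3 8, IBox.mk 3 6 2 4, IBox.mk 3 5 4 7),
  (IBox.mk 1 8 3 8, IBox.mk 1 2 0 7, IBox.mk 3 5 4 7),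
  (IBox.mk 1 8 3 8, IBox.mk 4 7 4 5, IBox.mk 3 5 4 7),
  (IBox.mk 1 8 3 8, IBox.mk 7 8 3 7, IBox.mk 3 5 4 7),
  (IBox.mk 1 8 3 8, IBox.mk 1 6 1 8, IBox.mk 3 5 4 7),
  (IBox.mk 1 8 3 8, IBox.mk 3 4 4 5, IBox.mk 3 5 4 7),
  (IBox.mk 1 8 3 8, IBox.mk 5 6 5 6, IBox.mk 3 5 4 7),
  (IBox.mk 1 8 3 8, IBox.mk 1 8 0 8, IBox.mk 3 5 4 7),
  (IBox.mk 1 8 3 8, IBox.mk 2 5 4 7, IBox.mk 3 5 4 7),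
  (IBox.mk 1 8 3 8, IBox.mk 6 7 5 6, IBox.mk 3 5 4 7),
  (IBox.mk 1 8 3 8, IBox.mk 2 8 3 8, IBox.mk 3 5 4 7),
  (IBox.mk 1 8 3 8, IBox.mk 2 3 5 7, IBox.mk 4 8 5 7),
  (IBox.mk 1 8 3 8, IBox.mk 2 5 5 7, IBox.mk 0 8 4 8),
  (IBox.mk 1 8 3 8, IBox.mk 4 7 4 7, IBox.mk 5 6 5 6),
  (IBox.mk 1 8 3 8, IBox.mk 3 5 4 7, IBox.mk 1 8 0 8),
  (IBox.mk 1 8 3 8, IBox.mk 3 4 5 6, IBox.mk 2 5 4 7),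
  (IBox.mk 3 6 2 4, IBox.mk 2 7 1 7, IBox.mk 1 8 0 8),
  (IBox.mk 3 6 2 4, IBox.mk 0 8 0 8, IBox.mk 1 7 1 5),
  (IBox.mk 2 6 1 6, IBox.mk 1 7 0 8, IBox.mk 4 5 2 4),
  (IBox.mk 2 6 1 6, IBox.mk 4 5 2 4, IBox.mk 1 7 0 8)]

def certOK (b1 b2 γ : RCC8Basic) : Bool :=
  certs.any fun c => c.1.validB && c.2.1.validB && c.2.2.validB &&
    brel c.1 c.2.1 == b1 && brel c.2.1 c.2.2 == b2 && brel c.1 c.2.2 == γ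

set_option maxRecDepth 4000 in
set_option maxHeartbeats 4000000 in
theorem certs_complete : ∀ b1 b2 γ : RCC8Basic, γ ∈ tableL b1 b2 → certOK b1 b2 γ = true := by
  decide

lemma comp_of_certOK {b1 b2 γ : RCC8Basic} (h : certOK b1 b2 γ = true) :
    γ ∈ RCC8Rel.comp {b1} {b2} := by
  simp only [certOK, List.any_eq_true, Bool.and_eq_true, beq_iff_eq] at h
  obtain ⟨c, -, ⟨⟨⟨⟨v1, v2⟩, v3⟩, e1⟩, e2⟩, e3⟩ := h
  rw [← e1, ← e2, ← e3]
  exact realize c.1 c.2.1 c.2.2 v1 v2 v3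

theorem comp_single (b1 b2 : RCC8Basic) :
    RCC8Rel.comp {b1} {b2} = {γ | γ ∈ tableL b1 b2} := by
  ext γ
  constructor
  · rintro ⟨x, z, hγ, y, ⟨b, hb, h1⟩, ⟨b', hb', h2⟩⟩
    obtain rfl := hb
    obtain rfl := hb'
    exact sound h1 h2 hγ
  · intro h
    exact comp_of_certOK (certs_complete _ _ _ h)


/- ### the finite closure layer -/

def enc : RCC8Basic → Nat
  | .DC => 0 | .EC => 1 | .PO => 2 | .TPP => 3
  | .NTPP => 4 | .TPPi => 5 | .NTPPi => 6 | .EQ => 7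

def univL : List RCC8Basic := [.DC, .EC, .PO, .TPP, .NTPP, .TPPi, .NTPPi, .EQ]

lemma mem_univL (b : RCC8Basic) : b ∈ univL := by cases b <;> decide

def compL (l1 l2 : List RCC8Basic) : List RCC8Basic :=
  l1.flatMap fun b1 => l2.flatMap fun b2 => tableL b1 b2

def convL (l : List RCC8Basic) : List RCC8Basic := l.map RCC8Basic.conv

def interL (l1 l2 : List RCC8Basic) : List RCC8Basic :=
  l1.filter fun b => decide (b ∈ l2)

def toSet (l : List RCC8Basic) : RCC8Rel := {b | b ∈ l}

lemma mem_toSet {l : List RCC8Basic} {b : RCC8Basic} : b ∈ toSet l ↔ b ∈ l := Iff.rfl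

lemma conv_conv (b : RCC8Basic) : b.conv.conv = b := by cases b <;> rfl

lemma comp_toSet (l1 l2 : List RCC8Basic) :
    RCC8Rel.comp (toSet l1) (toSet l2) = toSet (compL l1 l2) := by
  ext γ
  constructor
  · rintro ⟨x, z, hγ, y, ⟨b, hb, h1⟩, ⟨b', hb', h2⟩⟩
    exact mem_toSet.2 <| List.mem_flatMap.2 ⟨b, hb, List.mem_flatMap.2 ⟨b', hb', sound h1 h2 hγ⟩⟩
  · intro h
    obtain ⟨b, hb, hrest⟩ := List.mem_flatMap.1 (mem_toSet.1 h)
    obtain ⟨b', hb', hmem⟩ := List.mem_flatMap.1 hrest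
    have hm : γ ∈ RCC8Rel.comp {b} {b'} := by
      rw [comp_single]; exact hmem
    obtain ⟨x, z, hγ, y, ⟨c, hc, h1⟩, ⟨c', hc', h2⟩⟩ := hm
    obtain rfl := hc
    obtain rfl := hc'
    exact ⟨x, z, hγ, y, ⟨c, hb, h1⟩, ⟨c', hb', h2⟩⟩

lemma conv_toSet (l : List RCC8Basic) :
    RCC8Rel.conv (toSet l) = toSet (convL l) := by
  ext b
  show b.conv ∈ l ↔ b ∈ l.map RCC8Basic.conv
  constructor
  · intro h
    exact List.mem_map.2 ⟨b.conv, h, conv_conv b⟩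
  · intro h
    obtain ⟨a, ha, hab⟩ := List.mem_map.1 h
    rw [← hab, conv_conv]
    exact ha

lemma inter_toSet (l1 l2 : List RCC8Basic) :
    toSet l1 ∩ toSet l2 = toSet (interL l1 l2) := by
  ext b
  show b ∈ l1 ∧ b ∈ l2 ↔ b ∈ l1.filter _
  rw [List.mem_filter]
  simp

lemma toSet_eq {l1 l2 : List RCC8Basic} (h : ∀ b : RCC8Basic, b ∈ l1 ↔ b ∈ l2) :
    toSet l1 = toSet l2 := Set.ext h

def F : List (List RCC8Basic) := [
  [.DC],
  [.EC],
  [.PO],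
  [.TPP],
  [.NTPP],
  [.TPPi],
  [.NTPPi],
  [.EQ],
  [.DC, .EC],
  [.EC, .PO],
  [.PO, .TPP],
  [.PO, .TPPi],
  [.TPP, .NTPP],
  [.TPPi, .NTPPi],
  [.DC, .EC, .PO],
  [.EC, .PO, .TPP],
  [.EC, .PO, .TPPi],
  [.PO, .TPP, .NTPP],
  [.PO, .TPPi, .NTPPi],
  [.DC, .EC, .PO, .TPP],
  [.DC, .EC, .PO, .TPPi],
  [.EC, .PO, .TPP, .NTPP],
  [.EC, .PO, .TPPi, .NTPPi],
  [.PO, .TPP, .TPPi, .EQ],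
  [.DC, .EC, .PO, .TPP, .NTPP],
  [.DC, .EC, .PO, .TPPi, .NTPPi],
  [.EC, .PO, .TPP, .TPPi, .EQ],
  [.PO, .TPP, .NTPP, .TPPi, .EQ],
  [.PO, .TPP, .TPPi, .NTPPi, .EQ],
  [.DC, .EC, .PO, .TPP, .TPPi, .EQ],
  [.EC, .PO, .TPP, .NTPP, .TPPi, .EQ],
  [.EC, .PO, .TPP, .TPPi, .NTPPi, .EQ],
  [.PO, .TPP, .NTPP, .TPPi, .NTPPi, .EQ],
  [.DC, .EC, .PO, .TPP, .NTPP, .TPPi, .EQ],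
  [.DC, .EC, .PO, .TPP, .TPPi, .NTPPi, .EQ],
  [.EC, .PO, .TPP, .NTPP, .TPPi, .NTPPi, .EQ],
  [.DC, .EC, .PO, .TPP, .NTPP, .TPPi, .NTPPi, .EQ]]

def compBig : Nat := 2614245296126319263205892954070791082913259524409969581027203418540967394891479117944433110814853026183653122747975043431003675236614215923263768919228537599386620914804192169260609494391280371121510882282330238545479063620115187055833084991874129750100954559738015381938073902140590883193982794991333926310538582758411556370634262883704409217053797456794842989956289050375295305452038761021818319364322644096272895441160205432711501135554152534139798300867927787027857298024433095922226038369318544673201571369684810970404535674551936137435032948433059042720993444675479643457275136823572203712068701980316497949097062788134026474631808008627171420009092728770724362125707246077314881257544409447108036789883873784742932183638595169145235617456385991513994325637402856186027007673402021648688459473783669987895833104044026151687104597723548101092885927525034918797526503508595527381327829358928759731123925705940875311151038122576876120399871382303629498644507586794112842286188048632370596012621053050317859313766945880393640417094302426941717491630523942631375844110696001699233612714705458785781768295469547029875531471498520720740364638552982360845936532676738034353096527050217336167904316865988763339192440253916087011585804325510552091675987984888364750116379377427657049538724791649015646307900083063308322845877317744389279747391532341250192330316092103951771492728381065221367852119667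143115724086388929031957821378630273139040669037929904816194320437245685486537600091842453170785447314744272032659546987733780490316684409494549622078121670835045954095917353859530513085405687749688269797901810792192812560027724455694206369762525278258389223661562497043141444705734034754021468137366628833916464021468923987810835509776408697688465698068537649186721591764526646831266377616102457655794183881626227244853263947984293223420891871655578345796946284793642257553163408493178317004380563591084027132468303940265097671916749260219718476046931767089456869137379473413485979652555314827823030314854191769030061184808977575402507572767367098687220079822493596596965963088122325433787101991749102417052590511126695399302922523284124944809079054422968779481497187302608360453541112003219877118523649835616768527666245325565538732686540659413373890861262008326239488564143365157324513759608930588820079035026685742640115333056642571488835701164140814013527801351827289880825933368617978081972465848219457251543882343560711908214434896372037281235188018934774483227141834276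
def interBig : Nat := 2613092630651836759121587004796509428996631103102910511547032693930005793448041851163352418192123374392042520614631075632490392366524347831934706561944508664370549289149549028794279586642323550856082425636824919944801968221953670918255702688220746652283002567228651638079076874167192811354570894961862895148051824032251748067967652548759841023788936608746388673289504163719584747783757633238194322223751936325398065743625761970793497093779913408631572707727921740703023513764326165871103959984879756143287142822887560627742876557852303973830669056381576669069907996598308762878629792340542755131611877459367809623559178642674006162990309538321022023746594789175546694056491104998703700817931930234689159766747184738939140293437776355746456608646080417057682768333781595562610357889888800567751422481439416296672647237547111432809608042868126024060743502164678217404229392137355347428817927317658287899685167210014596035884753234195586720888833399280400567203750428549217293031280131628970832020640551529664946349503053573527460571920510417951575150509771654568697078497052501397093786203806956626833466971014078188694812707558829540547855280541051663841189591862253144004332596159233996639861234686340020596103084485413172097494096530575253261543381808378384699128005307863058716371485406390660936585399594272297171270776405940437304615925512718636225163970396517798630038370339941762721706804901634089951172945756004104167480731984081083811994470697686094211424091473362748292905893499697277540377845654459424346584478027593958044887843254876078004832207389672353943265810082113224807403782070061307787440166995234975167750611547402219292930783817378666378449944598355613630073837332707431134955834246641075465198000123029420975683346448951130553786315657742266481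674857529023790060409781948282948462866220030815937147579802221108821184901539218537402251149848768260225578557647092293167203659571936880045739089287204294175264418113418286342275705682944817756068564585590315688336602978605715883661795633318434016868906211234783959938110679843782325716273534213374045626454584688976727154614672669972794303306244521731018564739861840886212659583584077202735584763459162430780159418663750682819416856124867257902284364361122528072011557229059140019311202883451078506783684405768510401858464696871766887514418501141840776909697974810152799497318193657649036555467378928103740473553021223386765354604135855467300403329388434606520428457811436785984645521473073189396927633728
def convBig : Nat := 3849697485692904893525650008697655441396850802815537247244474654784
def fmBig : Nat := 127312682537714619506595346847075886668479113067322510939283431722675038752674454790472193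

def compF (i j : Nat) : Nat := (compBig >>> (6*(i*37+j))) &&& 63
def interF (i j : Nat) : Nat := (interBig >>> (6*(i*37+j))) &&& 63
def convF (i : Nat) : Nat := (convBig >>> (6*i)) &&& 63
def fm (i : Nat) : Nat := (fmBig >>> (8*i)) &&& 255

def eqML (l1 l2 : List RCC8Basic) : Bool :=
  univL.all fun b => decide (b ∈ l1) == decide (b ∈ l2)

lemma eqML_iff {l1 l2 : List RCC8Basic} (h : eqML l1 l2 = true) (b : RCC8Basic) :
    b ∈ l1 ↔ b ∈ l2 := by
  simp only [eqML, List.all_eq_true, beq_iff_eq, decide_eq_decide] at h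
  exact h b (mem_univL b)

def chkAB : Bool :=
  (List.range 37).all fun i => (List.range 37).all fun j =>
    (compF i j < 37) && eqML (compL (F.getD i []) (F.getD j [])) (F.getD (compF i j) [])

def chkCB : Bool :=
  (List.range 37).all fun j => (List.range 37).all fun k =>
    if interF j k == 37 then (interL (F.getD j []) (F.getD k [])).isEmpty
    else (interF j k < 37) &&
      eqML (interL (F.getD j []) (F.getD k [])) (F.getD (interF j k) [])

def chkVB : Bool :=
  (List.range 37).all fun i =>
    (convF i < 37) && eqML (convL (F.getD i [])) (F.getD (convF i) [])

def chkFMB : Bool :=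
  (List.range 37).all fun i => univL.all fun b =>
    decide (b ∈ F.getD i []) == (fm i).testBit (enc b)

def chkDB : Bool :=
  (List.range 37).all fun j => (List.range 37).all fun k =>
    interF j k == 37 ||
    ((List.range 37).all fun i =>
      (fm (compF i (interF j k)) == (fm (compF i j) &&& fm (compF i k))) &&
      (fm (compF (interF j k) i) == (fm (compF j i) &&& fm (compF k i))))

set_option maxRecDepth 10000 in
set_option maxHeartbeats 12000000 in
theorem chkA : chkAB = true := by decide

set_option maxRecDepth 10000 in
set_option maxHeartbeats 12000000 in
theorem chkC : chkCB = true := by decide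

set_option maxRecDepth 10000 in
set_option maxHeartbeats 12000000 in
theorem chkV : chkVB = true := by decide

set_option maxRecDepth 10000 in
set_option maxHeartbeats 12000000 in
theorem chkFM : chkFMB = true := by decide

set_option maxRecDepth 10000 in
set_option maxHeartbeats 12000000 in
theorem chkD : chkDB = true := by decide

/-- relation number `i` of the closure family. -/
def LS (i : Nat) : RCC8Rel := toSet (F.getD i [])

lemma of_chkA {i j : Nat} (hi : i < 37) (hj : j < 37) :
    compF i j < 37 ∧
      RCC8Rel.comp (LS i) (LS j) = LS (compF i j) := by
  have h := chkA
  simp only [chkAB, List.all_eq_true, List.mem_range, Bool.and_eq_true,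
    decide_eq_true_eq] at h
  obtain ⟨h1, h2⟩ := h i hi j hj
  exact ⟨h1, by rw [LS, LS, LS, comp_toSet]; exact toSet_eq (eqML_iff h2)⟩

lemma of_chkV {i : Nat} (hi : i < 37) :
    convF i < 37 ∧ RCC8Rel.conv (LS i) = LS (convF i) := by
  have h := chkV
  simp only [chkVB, List.all_eq_true, List.mem_range, Bool.and_eq_true,
    decide_eq_true_eq] at h
  obtain ⟨h1, h2⟩ := h i hi
  exact ⟨h1, by rw [LS, LS, conv_toSet]; exact toSet_eq (eqML_iff h2)⟩

lemma of_chkC {j k : Nat} (hj : j < 37) (hk : k < 37)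
    (hne : (LS j ∩ LS k).Nonempty) :
    interF j k < 37 ∧ LS j ∩ LS k = LS (interF j k) := by
  have h := chkC
  simp only [chkCB, List.all_eq_true, List.mem_range] at h
  have h2 := h j hj k hk
  have hint : LS j ∩ LS k = toSet (interL (F.getD j []) (F.getD k [])) :=
    inter_toSet _ _
  by_cases hs : interF j k = 37
  · exfalso
    rw [if_pos (by simp [hs])] at h2
    rw [List.isEmpty_iff] at h2
    obtain ⟨b, hb⟩ := hne
    rw [hint] at hb
    rw [h2] at hb
    simp [toSet] at hb
  · rw [if_neg (by simp [hs])] at h2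
    simp only [Bool.and_eq_true, decide_eq_true_eq] at h2
    exact ⟨h2.1, by rw [hint, LS]; exact toSet_eq (eqML_iff h2.2)⟩

lemma mem_LS_iff {i : Nat} (hi : i < 37) (b : RCC8Basic) :
    b ∈ LS i ↔ (fm i).testBit (enc b) = true := by
  have h := chkFM
  simp only [chkFMB, List.all_eq_true, List.mem_range, beq_iff_eq] at h
  have h2 := h i hi b (mem_univL b)
  rw [LS, mem_toSet, ← decide_eq_true_eq (p := b ∈ F.getD i []), h2]

lemma LS_inter_of_fm {a b c : Nat} (ha : a < 37) (hb : b < 37) (hc : c < 37)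
    (h : fm a = fm b &&& fm c) : LS a = LS b ∩ LS c := by
  ext γ
  rw [Set.mem_inter_iff, mem_LS_iff ha, mem_LS_iff hb, mem_LS_iff hc, h,
    Nat.testBit_and, Bool.and_eq_true]

lemma of_chkD {i j k : Nat} (hi : i < 37) (hj : j < 37) (hk : k < 37)
    (hs : interF j k ≠ 37) :
    fm (compF i (interF j k)) = fm (compF i j) &&& fm (compF i k) ∧
    fm (compF (interF j k) i) = fm (compF j i) &&& fm (compF k i) := by
  have h := chkD
  simp only [chkDB, List.all_eq_true, List.mem_range, Bool.or_eq_true,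
    Bool.and_eq_true, beq_iff_eq] at h
  rcases h j hj k hk with h' | h'
  · exact absurd h' hs
  · exact h' i hi

/-- every relation in `B̂₈` is one of the 37 relations of the closure family. -/
theorem bhat8_LS {R : RCC8Rel} (h : BHat8 R) : ∃ i : Nat, i < 37 ∧ R = LS i := by
  induction h with
  | basic b =>
    refine ⟨enc b, by cases b <;> decide, ?_⟩
    have he : F.getD (enc b) [] = [b] := by cases b <;> rfl
    rw [LS, he]
    ext x
    simp [toSet]
  | conv hR ih =>
    obtain ⟨i, hi, rfl⟩ := ih
    obtain ⟨h1, h2⟩ := of_chkV hi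
    exact ⟨convF i, h1, h2.symm ▸ rfl⟩
  | comp hR hS ihR ihS =>
    obtain ⟨i, hi, rfl⟩ := ihR
    obtain ⟨j, hj, rfl⟩ := ihS
    obtain ⟨h1, h2⟩ := of_chkA hi hj
    exact ⟨compF i j, h1, h2⟩
  | inter hR hS hne ihR ihS =>
    obtain ⟨i, hi, rfl⟩ := ihR
    obtain ⟨j, hj, rfl⟩ := ihS
    obtain ⟨h1, h2⟩ := of_chkC hi hj hne
    exact ⟨interF i j, h1, h2⟩

end RCC8Aux

/-- In `B̂₈`, weak composition distributes over nonempty intersections. -/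
theorem bhat8_distributive (R T₁ T₂ : RCC8Rel) (hR : BHat8 R) (h1 : BHat8 T₁)
    (h2 : BHat8 T₂) (h12 : (T₁ ∩ T₂).Nonempty) :
    RCC8Rel.comp R (T₁ ∩ T₂) = RCC8Rel.comp R T₁ ∩ RCC8Rel.comp R T₂ ∧
    RCC8Rel.comp (T₁ ∩ T₂) R = RCC8Rel.comp T₁ R ∩ RCC8Rel.comp T₂ R := by
  open RCC8Aux in
  obtain ⟨i, hi, rfl⟩ := bhat8_LS hR
  obtain ⟨j, hj, rfl⟩ := bhat8_LS h1
  obtain ⟨k, hk, rfl⟩ := bhat8_LS h2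
  obtain ⟨hm, hint⟩ := of_chkC hj hk h12
  have hs : interF j k ≠ 37 := by omega
  obtain ⟨hd1, hd2⟩ := of_chkD hi hj hk hs
  obtain ⟨hc1, he1⟩ := of_chkA hi hm
  obtain ⟨hc2, he2⟩ := of_chkA hi hj
  obtain ⟨hc3, he3⟩ := of_chkA hi hk
  obtain ⟨hc4, he4⟩ := of_chkA hm hi
  obtain ⟨hc5, he5⟩ := of_chkA hj hi
  obtain ⟨hc6, he6⟩ := of_chkA hk hi
  constructor
  · rw [hint, he1, he2, he3]
    exact LS_inter_of_fm hc1 hc2 hc3 hd1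
  · rw [hint, he4, he5, he6]
    exact LS_inter_of_fm hc4 hc5 hc6 hd2
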